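/- arXiv:2406.16237 — 6 statements merged into one kernel-verified Lean document; each statement's English description precedes it below -/
import Mathlib

section
/- For a discrete-time linear control system on a Lie group G, the reachable sets from the identity satisfy the semigroup-type property R_{τ₁+τ₂} = R_{τ₁} · f₀^{τ₁}(R_{τ₂}) = R_{τ₂} · f₀^{τ₂}(R_{τ₁}). -/
open Pointwise

/-- Reachable sets from the identity of the discrete-time linear system
`g_{k+1} = F(u_k) · ψ(g_k)`: `R_0 = {1}` and `R_{k+1} = R_1 · ψ(R_k)`. -/
def Rset {G : Type*} [Group G] {α : Type*} (U : Set α) (F : α → G) (ψ : G → G) :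
    ℕ → Set G
  | 0 => {1}
  | k + 1 => (F '' U) * (ψ '' Rset U F ψ k)

lemma reachable_semigroup_aux {G : Type*} [Group G] {α : Type*}
    (U : Set α) (F : α → G) (ψ : G ≃* G) (τ₁ τ₂ : ℕ) :
    Rset U F ψ (τ₁ + τ₂) = Rset U F ψ τ₁ * ((⇑ψ)^[τ₁] '' Rset U F ψ τ₂) := by
  induction τ₁ with
  | zero => simp [Rset]
  | succ n ih =>
      have : n + 1 + τ₂ = (n + τ₂) + 1 := by ring
      rw [this]
      show (F '' U) * (⇑ψ '' Rset U F (⇑ψ) (n + τ₂))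
          = (F '' U) * (⇑ψ '' Rset U F (⇑ψ) n) * ((⇑ψ)^[n + 1] '' Rset U F (⇑ψ) τ₂)
      rw [ih, Set.image_mul, mul_assoc, Function.iterate_succ', Function.comp_def,
        ← Set.image_image]
      simp [Set.image_image]

/-- For a discrete-time linear control system on a group `G`, the
reachable sets from the identity satisfy the semigroup-type property
`R_{τ₁+τ₂} = R_{τ₁} · ψ^{τ₁}(R_{τ₂}) = R_{τ₂} · ψ^{τ₂}(R_{τ₁})`. -/
theorem reachable_semigroup_property {G : Type*} [Group G] {α : Type*}
    (U : Set α) (F : α → G) (ψ : G ≃* G) (h0 : ∃ u ∈ U, F u = 1)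
    (τ₁ τ₂ : ℕ) :
    Rset U F ψ (τ₁ + τ₂)
        = Rset U F ψ τ₁ * ((⇑ψ)^[τ₁] '' Rset U F ψ τ₂) ∧
    Rset U F ψ (τ₁ + τ₂)
        = Rset U F ψ τ₂ * ((⇑ψ)^[τ₂] '' Rset U F ψ τ₁) := by
  refine ⟨reachable_semigroup_aux U F ψ τ₁ τ₂, ?_⟩
  rw [Nat.add_comm]
  exact reachable_semigroup_aux U F ψ τ₂ τ₁
end

section
/- For a discrete-time linear control system on a Lie group G, the interior of the reachable set R_k from the identity is nonempty if and only if the interior of the controllable set C_k to the identity is nonempty. More precisely, if g ∈ int R_k then f₀^{-k}(g⁻¹) ∈ int C_k. -/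
/-- For a discrete-time linear control system on a topological group `G`
(with `f₀` a continuous automorphism with continuous inverse and solution satisfying
`φ k g u = φ k e u * f₀^[k] g`), the interior of the reachable set `R_k` from the identity
is nonempty iff the interior of the controllable set `C_k` to the identity is nonempty;
more precisely, if `g ∈ int R_k` then `f₀⁻ᵏ(g⁻¹) ∈ int C_k`. -/
theorem interior_reachable_iff_interior_controllable {G : Type*} [Group G]
    [TopologicalSpace G] [IsTopologicalGroup G] {U : Type*}
    (f₀ : G ≃* G) (hf₀ : Continuous f₀) (hf₀' : Continuous f₀.symm)
    (φ : ℕ → G → (ℕ → U) → G)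
    (hφ : ∀ (k : ℕ) (g : G) (u : ℕ → U), φ k g u = φ k 1 u * (⇑f₀)^[k] g)
    (k : ℕ) :
    (∀ g ∈ interior {h : G | ∃ u : ℕ → U, φ k 1 u = h},
        (⇑f₀.symm)^[k] g⁻¹ ∈ interior {g' : G | ∃ u : ℕ → U, φ k g' u = 1}) ∧
    ((interior {h : G | ∃ u : ℕ → U, φ k 1 u = h}).Nonempty ↔
      (interior {g' : G | ∃ u : ℕ → U, φ k g' u = 1}).Nonempty) := by
  set F : G ≃ₜ G := ⟨f₀.toEquiv, hf₀, hf₀'⟩ with hF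
  -- build the iterated homeomorphism
  obtain ⟨E, hE, hEsymm⟩ : ∃ E : G ≃ₜ G,
      ⇑E = (⇑f₀)^[k] ∧ ⇑E.symm = (⇑f₀.symm)^[k] := by
    induction k with
    | zero => exact ⟨Homeomorph.refl G, rfl, rfl⟩
    | succ n ih =>
      obtain ⟨E, hE, hEsymm⟩ := ih
      refine ⟨F.trans E, ?_, ?_⟩
      · ext x
        simp [Homeomorph.trans, hE, Function.iterate_succ, hF]
      · ext x
        simp [Homeomorph.trans, hEsymm, hF]
        exact ((Function.iterate_succ_apply' f₀.symm n x).symm).trans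
          (Function.iterate_succ_apply f₀.symm n x)
  set e : G ≃ₜ G := (Homeomorph.inv G).trans E.symm with he
  have he' : ∀ g : G, e g = (⇑f₀.symm)^[k] g⁻¹ := by
    intro g; simp [he, hEsymm]
  have hesymm : ∀ g : G, e.symm g = (E g)⁻¹ := fun g => rfl
  set R := {h : G | ∃ u : ℕ → U, φ k 1 u = h} with hR
  set C := {g' : G | ∃ u : ℕ → U, φ k g' u = 1} with hC
  have hCR : C = e '' R := by
    ext g'
    constructor
    · rintro ⟨u, hu⟩
      rw [hφ k g' u] at hu
      refine ⟨(E g')⁻¹, ⟨u, ?_⟩, ?_⟩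
      · rw [hE]; exact eq_inv_of_mul_eq_one_left hu
      · rw [he' ((E g')⁻¹), ← hEsymm, inv_inv, E.symm_apply_apply]
    · rintro ⟨h, ⟨u, hu⟩, rfl⟩
      refine ⟨u, ?_⟩
      rw [hφ k (e h) u, hu, ← hE, he' h, ← hEsymm, E.apply_symm_apply, mul_inv_cancel]
  have hint : interior C = e '' interior R := by
    rw [hCR, ← Homeomorph.image_interior]
  constructor
  · intro g hg
    rw [← he' g, hint]
    exact Set.mem_image_of_mem e hg
  · rw [hint]
    exact (Set.image_nonempty).symm
end

section
/- For a discrete-time linear control system on a Lie group G, if the identity e belongs to the interior of the reachable set R = ⋃_k R_k, then R is open. -/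
open Pointwise

/-- For a discrete-time linear control system on a topological group `G`,
if the identity belongs to the interior of the reachable set `R = ⋃_{k ≥ 1} R_k`, then `R`
is open.  Here `R_k` satisfies `e ∈ R_k`, `R_{k+1} = R_1 · f₀(R_k)` and `R_k ⊆ R_{k+1}`,
where `f₀` is a continuous automorphism with continuous inverse. -/
theorem reachable_open_of_one_mem_interior {G : Type*} [Group G]
    [TopologicalSpace G] [IsTopologicalGroup G]
    (f₀ : G ≃* G) (hf₀ : Continuous f₀) (hf₀' : Continuous f₀.symm)
    (R : ℕ → Set G)
    (hone : ∀ k, (1 : G) ∈ R k)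
    (hrec : ∀ k, R (k + 1) = R 1 * (⇑f₀ '' R k))
    (hmono : ∀ k, R k ⊆ R (k + 1))
    (h1 : (1 : G) ∈ interior (⋃ k ≥ 1, R k)) :
    IsOpen (⋃ k ≥ 1, R k) := by
  set U := interior (⋃ k ≥ 1, R k) with hU
  have hUopen : IsOpen U := isOpen_interior
  have hUsub : U ⊆ ⋃ k ≥ 1, R k := interior_subset
  -- key algebraic lemma
  have key : ∀ k m : ℕ, ∀ x ∈ R (k + 1), ∀ y ∈ R m, x * (⇑f₀)^[k + 1] y ∈ R (k + 1 + m) := by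
    intro k
    induction k with
    | zero =>
      intro m x hx y hy
      have : x * f₀ y ∈ R 1 * (⇑f₀ '' R m) :=
        Set.mul_mem_mul hx ⟨y, hy, rfl⟩
      rw [← hrec m] at this
      simpa [add_comm] using this
    | succ k ih =>
      intro m x hx y hy
      rw [hrec (k + 1)] at hx
      obtain ⟨a, ha, b, hb, rfl⟩ := hx
      obtain ⟨c, hc, rfl⟩ := hb
      have hbc : c * (⇑f₀)^[k + 1] y ∈ R (k + 1 + m) := ih m c hc y hy
      have : a * f₀ (c * (⇑f₀)^[k + 1] y) ∈ R 1 * (⇑f₀ '' R (k + 1 + m)) :=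
        Set.mul_mem_mul ha ⟨_, hbc, rfl⟩
      rw [← hrec (k + 1 + m)] at this
      have heq : a * f₀ c * (⇑f₀)^[k + 1 + 1] y = a * f₀ (c * (⇑f₀)^[k + 1] y) := by
        rw [Function.iterate_succ_apply', map_mul, mul_assoc]
      rw [heq]
      convert this using 2
      omega
  -- homeomorphism from f₀
  let h : G ≃ₜ G := { f₀.toEquiv with continuous_toFun := hf₀, continuous_invFun := hf₀' }
  have hcoe : ⇑f₀ = ⇑h := rfl
  have hopen_iter : ∀ k : ℕ, IsOpen ((⇑f₀)^[k] '' U) := by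
    intro k
    induction k with
    | zero => simpa using hUopen
    | succ k ih =>
      rw [Function.iterate_succ', Set.image_comp, hcoe]
      exact h.isOpen_image.mpr ih
  have hone_iter : ∀ k : ℕ, (⇑f₀)^[k] (1 : G) = 1 := by
    intro k
    induction k with
    | zero => rfl
    | succ k ih => rw [Function.iterate_succ_apply', ih, map_one]
  rw [isOpen_iff_forall_mem_open]
  intro x hx
  simp only [Set.mem_iUnion] at hx
  obtain ⟨k, hk1, hxk⟩ := hx
  obtain ⟨k, rfl⟩ := Nat.exists_eq_add_of_le hk1
  refine ⟨x • ((⇑f₀)^[1 + k] '' U), ?_, (hopen_iter (1 + k)).smul x, ?_⟩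
  · rintro z ⟨w, ⟨y, hyU, rfl⟩, rfl⟩
    have hyR := hUsub hyU
    simp only [Set.mem_iUnion] at hyR
    obtain ⟨m, hm1, hym⟩ := hyR
    have : x * (⇑f₀)^[k + 1] y ∈ R (k + 1 + m) := by
      apply key k m x _ y hym
      simpa [add_comm] using hxk
    simp only [Set.mem_iUnion]
    exact ⟨k + 1 + m, by omega, by simpa [add_comm, smul_eq_mul] using this⟩
  · exact ⟨(⇑f₀)^[1 + k] 1, ⟨1, h1, rfl⟩, by simp [hone_iter (1 + k)]⟩
end

section
/- With notation as in the accessibility setup, let W ⊆ 𝔤 be a subspace of maximal dimension among images of d̂f_0 for f ranging over the class ℱ of smooth maps ℝᵈ → G with image in some R_k. Then W is invariant under the infinitesimal automorphism 𝛙 and under Ad(f(0)) for the maximizing f. -/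
open Manifold Pointwise

section Aux
variable {E : Type*} [NormedAddCommGroup E] [NormedSpace ℝ E]
  {H : Type*} [TopologicalSpace H] {I : ModelWithCorners ℝ E H}
  {G : Type*} [TopologicalSpace G] [ChartedSpace H G] [Group G] [LieGroup I (⊤ : ℕ∞) G]
  {V : Type*} [NormedAddCommGroup V] [NormedSpace ℝ V]

/-- right-logarithmic derivative at `0` -/
noncomputable def rld (I : ModelWithCorners ℝ E H) {G : Type*} [TopologicalSpace G]
    [ChartedSpace H G] [Group G] [LieGroup I (⊤ : ℕ∞) G] (f : V → G) (y : V) : E :=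
  id (α := E) (mfderiv I I (fun h => h * (f 0)⁻¹) (f 0) (mfderiv 𝓘(ℝ, V) I f 0 y))

theorem rlog_mul {f g : V → G} (hf : ContMDiff 𝓘(ℝ, V) I (⊤ : ℕ∞) f)
    (hg : ContMDiff 𝓘(ℝ, V) I (⊤ : ℕ∞) g) (y : V) :
    rld I (fun z => f z * g z) y
      = rld I f y + id (α := E) (mfderiv I I (fun x => f 0 * x * (f 0)⁻¹) (1 : G)
          (id (α := E) (rld I g y))) := by
  set a := f 0 with ha
  set b := g 0 with hb
  have hmr : ∀ c : G, MDifferentiable I I (fun h : G => h * c) :=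
    fun c => mdifferentiable_mul_right
  set Φ : G × G → G := fun p => p.1 * (a * p.2 * a⁻¹) with hΦ
  have hΦdiff : MDifferentiableAt (I.prod I) I Φ (1, 1) := by
    apply ContMDiffAt.mdifferentiableAt (n := ((⊤ : ℕ∞) : WithTop ℕ∞)) _ (by simp)
    exact (contMDiffAt_fst.mul ((contMDiffAt_const.mul contMDiffAt_snd).mul contMDiffAt_const))
  have hfd : MDifferentiableAt 𝓘(ℝ, V) I f 0 := (hf 0).mdifferentiableAt (by simp)
  have hgd : MDifferentiableAt 𝓘(ℝ, V) I g 0 := (hg 0).mdifferentiableAt (by simp)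
  have hF1 : MDifferentiableAt 𝓘(ℝ, V) I (fun z => f z * a⁻¹) 0 :=
    ((hf.mul contMDiff_const) 0).mdifferentiableAt (by simp)
  have hG1 : MDifferentiableAt 𝓘(ℝ, V) I (fun z => g z * b⁻¹) 0 :=
    ((hg.mul contMDiff_const) 0).mdifferentiableAt (by simp)
  have hpair : MDifferentiableAt 𝓘(ℝ, V) (I.prod I)
      (fun z => (f z * a⁻¹, g z * b⁻¹)) 0 := hF1.prodMk hG1
  have hmul : MDifferentiableAt 𝓘(ℝ, V) I (fun z => f z * g z) 0 :=
    ((hf.mul hg) 0).mdifferentiableAt (by simp)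
  have key : ((fun h : G => h * ((fun z => f z * g z) 0)⁻¹) ∘ (fun z => f z * g z))
      = Φ ∘ (fun z => (f z * a⁻¹, g z * b⁻¹)) := by
    funext z
    simp only [Function.comp, hΦ, ha, hb]
    group
  -- Step 1 : LHS = mfderiv of composite
  have L1 : rld I (fun z => f z * g z) y
      = mfderiv 𝓘(ℝ, V) I ((fun h : G => h * ((fun z => f z * g z) 0)⁻¹)
          ∘ (fun z => f z * g z)) 0 y := by
    rw [rld]; exact (mfderiv_comp_apply 0 (hmr _ _) hmul y).symm
  -- Step 2 : chain rule for Φ ∘ pair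
  have L2 : mfderiv 𝓘(ℝ, V) I (Φ ∘ (fun z => (f z * a⁻¹, g z * b⁻¹))) 0 y
      = mfderiv (I.prod I) I Φ (1, 1)
          ((mfderiv 𝓘(ℝ, V) (I.prod I) (fun z => (f z * a⁻¹, g z * b⁻¹)) 0) y) :=
    mfderiv_comp_apply_of_eq (I' := I.prod I) (g := Φ)
      (f := fun z => (f z * a⁻¹, g z * b⁻¹)) (x := 0) hΦdiff hpair (by simp [ha, hb]) y
  -- Step 3 : derivative of the pair
  have L3 : (mfderiv 𝓘(ℝ, V) (I.prod I) (fun z => (f z * a⁻¹, g z * b⁻¹)) 0) y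
      = ((mfderiv 𝓘(ℝ, V) I (fun z => f z * a⁻¹) 0 y : E),
         (mfderiv 𝓘(ℝ, V) I (fun z => g z * b⁻¹) 0 y : E)) := by
    rw [hF1.mfderiv_prod hG1]; rfl
  -- Step 4 : partial derivatives of Φ at (1,1)
  have L4 : ∀ X Y : E, mfderiv (I.prod I) I Φ (1, 1) ((X, Y) : E × E)
      = id (α := E) ((mfderiv I I (fun z : G => Φ (z, ((1 : G), (1 : G)).2)) (1 : G)) X)
        + id (α := E) ((mfderiv I I (fun z : G => Φ (((1 : G), (1 : G)).1, z)) (1 : G)) Y) := by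
    intro X Y
    exact mfderiv_prod_eq_add_apply (I := I) (I' := I) (I'' := I)
      (f := Φ) (p := ((1 : G), (1 : G))) (v := (X, Y)) hΦdiff
  have e1 : (fun z : G => Φ (z, ((1 : G), (1 : G)).2)) = id := by
    funext x; simp [hΦ]
  have e2 : (fun z : G => Φ (((1 : G), (1 : G)).1, z)) = fun x => a * x * a⁻¹ := by
    funext x; simp [hΦ, mul_assoc]
  have C1 : mfderiv 𝓘(ℝ, V) I (fun z => f z * a⁻¹) 0 y
      = mfderiv I I (fun h : G => h * a⁻¹) a (mfderiv 𝓘(ℝ, V) I f 0 y) :=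
    mfderiv_comp_apply (I' := I) (g := fun h : G => h * a⁻¹) (f := f) 0 (hmr a⁻¹ a) hfd y
  have C2 : mfderiv 𝓘(ℝ, V) I (fun z => g z * b⁻¹) 0 y
      = mfderiv I I (fun h : G => h * b⁻¹) b (mfderiv 𝓘(ℝ, V) I g 0 y) :=
    mfderiv_comp_apply (I' := I) (g := fun h : G => h * b⁻¹) (f := g) 0 (hmr b⁻¹ b) hgd y
  rw [L1, key, L2, L3]; erw [L4]; rw [e1, e2, mfderiv_id, C1, C2]
  rfl

theorem rlog_hom {φ : G →* G} (hφ : ContMDiff I I (⊤ : ℕ∞) φ) {f : V → G}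
    (hf : ContMDiff 𝓘(ℝ, V) I (⊤ : ℕ∞) f) (y : V) :
    rld I (fun z => φ (f z)) y = id (α := E) (mfderiv I I φ 1 (id (α := E) (rld I f y))) := by
  set a := f 0 with ha
  have hmr : ∀ c : G, MDifferentiable I I (fun h : G => h * c) :=
    fun c => mdifferentiable_mul_right
  have hfd : MDifferentiableAt 𝓘(ℝ, V) I f 0 := (hf 0).mdifferentiableAt (by simp)
  have hφf : MDifferentiableAt 𝓘(ℝ, V) I (fun z => φ (f z)) 0 :=
    ((hφ.comp hf) 0).mdifferentiableAt (by simp)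
  have hF1 : MDifferentiableAt 𝓘(ℝ, V) I (fun z => f z * a⁻¹) 0 :=
    ((hf.mul contMDiff_const) 0).mdifferentiableAt (by simp)
  have key : ((fun h : G => h * ((fun z => φ (f z)) 0)⁻¹) ∘ (fun z => φ (f z)))
      = φ ∘ (fun z => f z * a⁻¹) := by
    funext z
    simp only [Function.comp, ha, ← map_inv, ← map_mul]
  have L1 : rld I (fun z => φ (f z)) y
      = mfderiv 𝓘(ℝ, V) I ((fun h : G => h * ((fun z => φ (f z)) 0)⁻¹)
          ∘ (fun z => φ (f z))) 0 y := by
    rw [rld]; exact (mfderiv_comp_apply 0 (hmr _ _) hφf y).symm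
  have L2 : mfderiv 𝓘(ℝ, V) I (φ ∘ (fun z => f z * a⁻¹)) 0 y
      = mfderiv I I φ 1 ((mfderiv 𝓘(ℝ, V) I (fun z => f z * a⁻¹) 0) y) :=
    mfderiv_comp_apply_of_eq (I' := I) (g := ⇑φ) (f := fun z => f z * a⁻¹) (x := 0)
      ((hφ 1).mdifferentiableAt (by simp)) hF1 (by simp [ha]) y
  have C1 : mfderiv 𝓘(ℝ, V) I (fun z => f z * a⁻¹) 0 y
      = mfderiv I I (fun h : G => h * a⁻¹) a (mfderiv 𝓘(ℝ, V) I f 0 y) :=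
    mfderiv_comp_apply (I' := I) (g := fun h : G => h * a⁻¹) (f := f) 0 (hmr a⁻¹ a) hfd y
  rw [L1, key, L2, C1]
  rfl

theorem rld_point_congr {a b : G} (h : a = b) (v : E) :
    id (α := E) (mfderiv I I (fun x => x * a⁻¹) a v)
      = id (α := E) (mfderiv I I (fun x => x * b⁻¹) b v) := by subst h; rfl

theorem rld_comp_clm {V' : Type*} [NormedAddCommGroup V'] [NormedSpace ℝ V']
    {f : V → G} (hf : ContMDiff 𝓘(ℝ, V) I (⊤ : ℕ∞) f) (p : V' →L[ℝ] V) (y : V') :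
    rld I (fun z => f (p z)) y = rld I f (p y) := by
  have hfd : MDifferentiableAt 𝓘(ℝ, V) I f 0 := (hf 0).mdifferentiableAt (by simp)
  have hp : MDifferentiableAt 𝓘(ℝ, V') 𝓘(ℝ, V) p 0 := p.mdifferentiableAt
  have L : mfderiv 𝓘(ℝ, V') I (fun z => f (p z)) 0 y
      = mfderiv 𝓘(ℝ, V) I f 0 ((mfderiv 𝓘(ℝ, V') 𝓘(ℝ, V) (⇑p) 0) y) :=
    mfderiv_comp_apply_of_eq (g := f) (f := ⇑p) (x := 0) hfd hp (map_zero p) y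
  simp only [rld, id_eq]; rw [L, ContinuousLinearMap.mfderiv_eq]
  exact rld_point_congr (by rw [map_zero]) _

end Aux

section RsetLemmas
variable {G : Type*} [Group G] {α : Type*} [Zero α] {U : Set α} {F : α → G} (ψ : G ≃* G)

theorem one_mem_Rset (hU0 : (0 : α) ∈ U) (hF0 : F 0 = 1) :
    ∀ k, (1 : G) ∈ Rset U F (⇑ψ) k
  | 0 => rfl
  | k + 1 => by
    have h1 : (1 : G) ∈ F '' U := ⟨0, hU0, hF0⟩
    have h2 : (1 : G) ∈ ⇑ψ '' Rset U F (⇑ψ) k :=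
      ⟨1, one_mem_Rset hU0 hF0 k, map_one ψ⟩
    exact ⟨1, h1, 1, h2, mul_one 1⟩

theorem psi_image_Rset_subset (hU0 : (0 : α) ∈ U) (hF0 : F 0 = 1) (k : ℕ) :
    ⇑ψ '' Rset U F (⇑ψ) k ⊆ Rset U F (⇑ψ) (k + 1) := by
  intro x hx
  exact ⟨1, ⟨0, hU0, hF0⟩, x, hx, one_mul x⟩

theorem Rset_mul_subset (a b : ℕ) :
    Rset U F (⇑ψ) a * (⇑ψ)^[a] '' Rset U F (⇑ψ) b ⊆ Rset U F (⇑ψ) (a + b) := by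
  induction a with
  | zero =>
    simp only [Function.iterate_zero, Set.image_id, zero_add]
    rw [show Rset U F (⇑ψ) 0 = {1} from rfl, Set.singleton_mul]
    intro x hx
    rcases hx with ⟨y, hy, rfl⟩
    simpa using hy
  | succ a ih =>
    have h1 : Rset U F (⇑ψ) (a + 1) = (F '' U) * (⇑ψ '' Rset U F (⇑ψ) a) := rfl
    have h2 : Rset U F (⇑ψ) (a + 1 + b) = (F '' U) * (⇑ψ '' Rset U F (⇑ψ) (a + b)) := by
      rw [show a + 1 + b = (a + b) + 1 by omega]; rfl
    rw [h1, h2]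
    have h3 : (⇑ψ)^[a + 1] '' Rset U F (⇑ψ) b
        = ⇑ψ '' ((⇑ψ)^[a] '' Rset U F (⇑ψ) b) := by
      rw [Function.iterate_succ', Set.image_comp]
    rw [h3, mul_assoc, ← Set.image_mul]
    exact Set.mul_subset_mul_left (Set.image_mono ih)

theorem psi_iter_mem_Rset (hU0 : (0 : α) ∈ U) (hF0 : F 0 = 1) {x : G} {j : ℕ}
    (hx : x ∈ Rset U F (⇑ψ) j) :
    ∀ m, (⇑ψ)^[m] x ∈ Rset U F (⇑ψ) (j + m)
  | 0 => hx
  | m + 1 => by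
    rw [Function.iterate_succ_apply', show j + (m + 1) = (j + m) + 1 from rfl]
    exact psi_image_Rset_subset ψ hU0 hF0 _ ⟨_, psi_iter_mem_Rset hU0 hF0 hx m, rfl⟩

end RsetLemmas

section Span
variable {E : Type*} [NormedAddCommGroup E] [NormedSpace ℝ E]

theorem span_range_add {α β γ : Type*} [Zero α] [Zero β] (A : α → E) (B : β → E)
    (hA0 : A 0 = 0) (hB0 : B 0 = 0) (q₁ : γ → α) (q₂ : γ → β)
    (hsurj : ∀ u v, ∃ y, q₁ y = u ∧ q₂ y = v) :
    Submodule.span ℝ (Set.range fun y => A (q₁ y) + B (q₂ y))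
      = Submodule.span ℝ (Set.range A) ⊔ Submodule.span ℝ (Set.range B) := by
  apply le_antisymm
  · rw [Submodule.span_le]
    rintro x ⟨y, rfl⟩
    exact add_mem (Submodule.mem_sup_left (Submodule.subset_span ⟨_, rfl⟩))
      (Submodule.mem_sup_right (Submodule.subset_span ⟨_, rfl⟩))
  · apply sup_le
    · rw [Submodule.span_le]
      rintro x ⟨u, rfl⟩
      obtain ⟨y, hy1, hy2⟩ := hsurj u 0
      apply Submodule.subset_span
      exact ⟨y, by simp only [hy1, hy2, hB0, add_zero]⟩
    · rw [Submodule.span_le]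
      rintro x ⟨v, rfl⟩
      obtain ⟨y, hy1, hy2⟩ := hsurj 0 v
      apply Submodule.subset_span
      exact ⟨y, by simp only [hy1, hy2, hA0, zero_add]⟩

end Span

section Iter
variable {E : Type*} [NormedAddCommGroup E] [NormedSpace ℝ E]
  {H : Type*} [TopologicalSpace H] {I : ModelWithCorners ℝ E H}
  {G : Type*} [TopologicalSpace G] [ChartedSpace H G] [Group G] [LieGroup I (⊤ : ℕ∞) G]
  {V : Type*} [NormedAddCommGroup V] [NormedSpace ℝ V]

theorem contMDiff_iterate {φ : G → G} (hφ : ContMDiff I I (⊤ : ℕ∞) φ) :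
    ∀ n, ContMDiff I I (⊤ : ℕ∞) (φ^[n])
  | 0 => contMDiff_id
  | n + 1 => by
    rw [Function.iterate_succ]
    exact (contMDiff_iterate hφ n).comp hφ

theorem rld_psi_iter (ψ : G ≃* G) (hψ : ContMDiff I I (⊤ : ℕ∞) ψ) {f : V → G}
    (hf : ContMDiff 𝓘(ℝ, V) I (⊤ : ℕ∞) f) (n : ℕ) (y : V) :
    rld I (fun z => (⇑ψ)^[n] (f z)) y
      = (fun X : E => id (α := E) (mfderiv I I ψ 1 X))^[n] (rld I f y) := by
  induction n with
  | zero => simp only [Function.iterate_zero, id_eq]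
  | succ n ih =>
    have hiter : ContMDiff I I (⊤ : ℕ∞) ((⇑ψ)^[n]) := contMDiff_iterate hψ n
    have e : (fun z => (⇑ψ)^[n + 1] (f z)) = fun z => ψ.toMonoidHom ((⇑ψ)^[n] (f z)) := by
      funext z; rw [Function.iterate_succ_apply']; rfl
    have hg : ContMDiff 𝓘(ℝ, V) I (⊤ : ℕ∞) (fun z => (⇑ψ)^[n] (f z)) := hiter.comp hf
    rw [e, rlog_hom hψ hg, ih, Function.iterate_succ_apply']
    rfl

end Iter

section DAt
variable {E : Type*} [NormedAddCommGroup E] [NormedSpace ℝ E]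
  {H : Type*} [TopologicalSpace H] {I : ModelWithCorners ℝ E H}
  {G : Type*} [TopologicalSpace G] [ChartedSpace H G] [Group G] [LieGroup I (⊤ : ℕ∞) G]

/-- The derivative at `1` of a map `G → G`, as a linear endomorphism of `E`. -/
noncomputable def dAt1 (I : ModelWithCorners ℝ E H) {G : Type*} [TopologicalSpace G]
    [ChartedSpace H G] [Group G] [LieGroup I (⊤ : ℕ∞) G] (χ : G → G) : E →ₗ[ℝ] E where
  toFun := fun X => id (α := E) (mfderiv I I χ 1 X)
  map_add' := fun x y => (mfderiv I I χ 1).map_add x y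
  map_smul' := fun c x => (mfderiv I I χ 1).map_smul c x

theorem dAt1_leftInverse {χ χ' : G → G} (hχ : ContMDiff I I (⊤ : ℕ∞) χ) (hχ' : ContMDiff I I (⊤ : ℕ∞) χ')
    (h1 : χ 1 = 1) (hinv : ∀ x, χ' (χ x) = x) :
    ∀ X : E, dAt1 I χ' (dAt1 I χ X) = X := by
  intro X
  have hcd : MDifferentiableAt I I χ 1 := (hχ 1).mdifferentiableAt (by simp)
  have hcd' : MDifferentiableAt I I χ' 1 := (hχ' 1).mdifferentiableAt (by simp)
  have hcomp : id (α := E) (mfderiv I I (χ' ∘ χ) 1 X)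
      = id (α := E) (mfderiv I I χ' 1 (mfderiv I I χ 1 X)) := by
    rw [mfderiv_comp_apply_of_eq (g := χ') (f := χ) (x := (1 : G)) hcd' hcd h1 X]
  have hid : id (α := E) (mfderiv I I (χ' ∘ χ) 1 X) = X := by
    have he : (χ' ∘ χ) = @id G := funext hinv
    rw [he, mfderiv_id]
    rfl
  exact (hcomp.symm.trans hid)

end DAt

section More
variable {E : Type*} [NormedAddCommGroup E] [NormedSpace ℝ E]
  {H : Type*} [TopologicalSpace H] {I : ModelWithCorners ℝ E H}
  {G : Type*} [TopologicalSpace G] [ChartedSpace H G] [Group G] [LieGroup I (⊤ : ℕ∞) G]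
  {V : Type*} [NormedAddCommGroup V] [NormedSpace ℝ V]

theorem mfderiv_conj_congr {a b : G} (h : a = b) (v : E) :
    id (α := E) (mfderiv I I (fun x => a * x * a⁻¹) 1 v)
      = id (α := E) (mfderiv I I (fun x => b * x * b⁻¹) 1 v) := by subst h; rfl

theorem rld_zero {f : V → G} : rld I f 0 = 0 := by
  rw [rld]
  exact (congrArg (mfderiv I I _ (f 0)) (mfderiv 𝓘(ℝ, V) I f 0).map_zero).trans
    (mfderiv I I _ (f 0)).map_zero

end More


/-- In the accessibility setup, let `W ⊆ 𝔤` be a subspace of maximal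
dimension among the images of the right-invariant derivatives `d̂f_0` for `f` ranging
over the class `ℱ` of smooth maps `ℝᵈ → G` with image in some reachable set `R_k`.
Then `W` is invariant under the infinitesimal automorphism `𝛙 = dψ_e` and under
`Ad(f 0) = d(C_{f 0})_e` for the maximizing `f`. -/
theorem maximal_subspace_invariant {m : ℕ}
    {E : Type*} [NormedAddCommGroup E] [NormedSpace ℝ E] [FiniteDimensional ℝ E]
    {H : Type*} [TopologicalSpace H] (I : ModelWithCorners ℝ E H)
    {G : Type*} [TopologicalSpace G] [ChartedSpace H G] [Group G] [LieGroup I (⊤ : ℕ∞) G]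
    [ConnectedSpace G]
    (ψ : G ≃* G) (hψ : ContMDiff I I (⊤ : ℕ∞) ψ) (hψ' : ContMDiff I I (⊤ : ℕ∞) ψ.symm)
    (U : Set (Fin m → ℝ)) (hUopen : IsOpen U) (hUconn : IsConnected U) (hU0 : (0 : Fin m → ℝ) ∈ U)
    (F : (Fin m → ℝ) → G) (hF : ContMDiffOn 𝓘(ℝ, Fin m → ℝ) I 1 F U)
    (hF0 : F 0 = 1)
    (k d : ℕ) (f : (Fin d → ℝ) → G) (hf : ContMDiff 𝓘(ℝ, Fin d → ℝ) I (⊤ : ℕ∞) f)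
    (hfR : Set.range f ⊆ Rset U F (⇑ψ) k)
    (W : Submodule ℝ E)
    (hW : W = Submodule.span ℝ (Set.range fun y : Fin d → ℝ =>
      mfderiv I I (fun h => h * (f 0)⁻¹) (f 0)
        (mfderiv 𝓘(ℝ, Fin d → ℝ) I f 0 y)))
    (hmax : ∀ (k' d' : ℕ) (f' : (Fin d' → ℝ) → G),
      ContMDiff 𝓘(ℝ, Fin d' → ℝ) I (⊤ : ℕ∞) f' → Set.range f' ⊆ Rset U F (⇑ψ) k' →
      Module.finrank ℝ (Submodule.span ℝ (Set.range fun y : Fin d' → ℝ =>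
          mfderiv I I (fun h => h * (f' 0)⁻¹) (f' 0)
            (mfderiv 𝓘(ℝ, Fin d' → ℝ) I f' 0 y)))
        ≤ Module.finrank ℝ W) :
    (fun X : E => mfderiv I I ψ (1 : G) X) '' (W : Set E) = (W : Set E) ∧
    (fun X : E => mfderiv I I (fun x => f 0 * x * (f 0)⁻¹) (1 : G) X) '' (W : Set E)
      = (W : Set E) := by
  classical
  let Lψ : E →ₗ[ℝ] E := dAt1 I ⇑ψ
  let Lψ' : E →ₗ[ℝ] E := dAt1 I ⇑ψ.symm
  let LAd : E →ₗ[ℝ] E := dAt1 I (fun x => f 0 * x * (f 0)⁻¹)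
  let LAd' : E →ₗ[ℝ] E := dAt1 I (fun x => (f 0)⁻¹ * x * ((f 0)⁻¹)⁻¹)
  have hconj_smooth : ∀ b : G, ContMDiff I I (⊤ : ℕ∞) (fun x : G => b * x * b⁻¹) :=
    fun b => contMDiff_mul_left.mul contMDiff_const
  have hψinv1 : ∀ X : E, Lψ' (Lψ X) = X :=
    dAt1_leftInverse hψ hψ' (map_one ψ) (fun x => ψ.symm_apply_apply x)
  have hψinj : Function.Injective ⇑Lψ := Function.LeftInverse.injective hψinv1
  have hAdinv : ∀ X : E, LAd' (LAd X) = X := by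
    apply dAt1_leftInverse (hconj_smooth _) (hconj_smooth _)
    · simp
    · intro x; group
  have hAdinj : Function.Injective ⇑LAd := Function.LeftInverse.injective hAdinv
  have hW' : W = Submodule.span ℝ (Set.range (rld I f)) := hW
  -- the key invariance step
  have key : ∀ n, k ≤ n → Submodule.map (LAd ∘ₗ Lψ ^ n) W = W := by
    intro n hkn
    set T : E →ₗ[ℝ] E := LAd ∘ₗ Lψ ^ n with hT
    let p₁ : (Fin (d + d) → ℝ) →L[ℝ] (Fin d → ℝ) :=
      LinearMap.toContinuousLinearMap (LinearMap.funLeft ℝ ℝ (Fin.castAdd d))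
    let p₂ : (Fin (d + d) → ℝ) →L[ℝ] (Fin d → ℝ) :=
      LinearMap.toContinuousLinearMap (LinearMap.funLeft ℝ ℝ (Fin.natAdd d))
    let g : (Fin d → ℝ) → G := fun z => (⇑ψ)^[n] (f z)
    have hg : ContMDiff 𝓘(ℝ, Fin d → ℝ) I (⊤ : ℕ∞) g := (contMDiff_iterate hψ n).comp hf
    let f₁ : (Fin (d + d) → ℝ) → G := fun z => f (p₁ z)
    let f₂ : (Fin (d + d) → ℝ) → G := fun z => g (p₂ z)
    have hf₁ : ContMDiff 𝓘(ℝ, Fin (d + d) → ℝ) I (⊤ : ℕ∞) f₁ := hf.comp p₁.contMDiff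
    have hf₂ : ContMDiff 𝓘(ℝ, Fin (d + d) → ℝ) I (⊤ : ℕ∞) f₂ := hg.comp p₂.contMDiff
    have hft : ContMDiff 𝓘(ℝ, Fin (d + d) → ℝ) I (⊤ : ℕ∞) (fun z => f₁ z * f₂ z) := hf₁.mul hf₂
    have hrange : Set.range (fun z => f₁ z * f₂ z) ⊆ Rset U F (⇑ψ) (k + n) := by
      rintro x ⟨z, rfl⟩
      apply Rset_mul_subset ψ k n
      refine Set.mul_mem_mul (hfR ⟨p₁ z, rfl⟩) ?_
      have h1 : f (p₂ z) ∈ Rset U F (⇑ψ) k := hfR ⟨p₂ z, rfl⟩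
      have h2 : (⇑ψ)^[n - k] (f (p₂ z)) ∈ Rset U F (⇑ψ) (k + (n - k)) :=
        psi_iter_mem_Rset ψ hU0 hF0 h1 (n - k)
      rw [Nat.add_sub_cancel' hkn] at h2
      refine ⟨(⇑ψ)^[n - k] (f (p₂ z)), h2, ?_⟩
      rw [← Function.iterate_add_apply, Nat.add_sub_cancel' hkn]
    have hrld : rld I (fun z => f₁ z * f₂ z)
        = fun y => rld I f (p₁ y) + T (rld I f (p₂ y)) := by
      funext y
      have h1 := rlog_mul (I := I) hf₁ hf₂ y
      have h2 : rld I f₁ y = rld I f (p₁ y) := rld_comp_clm hf p₁ y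
      have h3 : rld I f₂ y = rld I g (p₂ y) := rld_comp_clm hg p₂ y
      have h4 : rld I g (p₂ y)
          = (fun X : E => id (α := E) (mfderiv I I ψ 1 X))^[n] (rld I f (p₂ y)) :=
        rld_psi_iter ψ hψ hf n (p₂ y)
      have h5 : (fun X : E => id (α := E) (mfderiv I I ψ 1 X))^[n] (rld I f (p₂ y))
          = (Lψ ^ n) (rld I f (p₂ y)) := by
        rw [Module.End.pow_apply]
        rfl
      have h6 : id (α := E) (mfderiv I I (fun x => f₁ 0 * x * (f₁ 0)⁻¹) 1
            ((Lψ ^ n) (rld I f (p₂ y))))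
          = LAd ((Lψ ^ n) (rld I f (p₂ y))) := by
        have he : f₁ 0 = f 0 := by show f (p₁ 0) = f 0; rw [map_zero]
        exact mfderiv_conj_congr he _
      simp only [id_eq] at h1 h4 h5 h6
      rw [h1, h2, h3, h4, h5, h6]
      rfl
    have hsurj : ∀ u v : Fin d → ℝ, ∃ y, p₁ y = u ∧ p₂ y = v := by
      intro u v
      refine ⟨Fin.append u v, ?_, ?_⟩
      · funext i; exact Fin.append_left u v i
      · funext i; exact Fin.append_right u v i
    have hspanB : Submodule.span ℝ (Set.range fun v => T (rld I f v))
        = Submodule.map T W := by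
      rw [hW', ← Submodule.span_image]
      congr 1
      exact Set.range_comp (⇑T) (rld I f)
    have hspan : Submodule.span ℝ (Set.range (rld I (fun z => f₁ z * f₂ z)))
        = W ⊔ Submodule.map T W := by
      rw [hrld]
      have := span_range_add (rld I f) (fun v => T (rld I f v))
        rld_zero (by show T (rld I f 0) = 0; rw [rld_zero]; exact T.map_zero)
        (⇑p₁) (⇑p₂) hsurj
      rw [hspanB, ← hW'] at this
      exact this
    have hle : Module.finrank ℝ
        (Submodule.span ℝ (Set.range (rld I (fun z : Fin (d + d) → ℝ => f₁ z * f₂ z))))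
        ≤ Module.finrank ℝ W :=
      hmax (k + n) (d + d) (fun z => f₁ z * f₂ z) hft hrange
    rw [hspan] at hle
    have hsup : W ⊔ Submodule.map T W = W :=
      (Submodule.eq_of_le_of_finrank_le le_sup_left hle).symm
    have hmaple : Submodule.map T W ≤ W := le_sup_right.trans hsup.le
    have hTinj : Function.Injective ⇑T := by
      rw [hT, LinearMap.coe_comp, Module.End.coe_pow]
      exact hAdinj.comp (Function.Injective.iterate hψinj n)
    have hfr : Module.finrank ℝ (Submodule.map T W) = Module.finrank ℝ W :=
      ((Submodule.equivMapOfInjective T hTinj W).finrank_eq).symm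
    exact Submodule.eq_of_le_of_finrank_le hmaple hfr.ge
  have hk := key k le_rfl
  have hk1 := key (k + 1) (Nat.le_succ k)
  rw [Submodule.map_comp] at hk hk1
  have hVeq : Submodule.map (Lψ ^ k) W = Submodule.map (Lψ ^ (k + 1)) W :=
    Submodule.map_injective_of_injective hAdinj (hk.trans hk1.symm)
  have hψkinj : Function.Injective ⇑(Lψ ^ k) := by
    rw [Module.End.coe_pow]; exact Function.Injective.iterate hψinj k
  have hψW : Submodule.map Lψ W = W := by
    apply Submodule.map_injective_of_injective hψkinj
    rw [← Submodule.map_comp, ← Module.End.mul_eq_comp, ← pow_succ]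
    exact hVeq.symm
  have hψpow : ∀ j, Submodule.map (Lψ ^ j) W = W := by
    intro j
    induction j with
    | zero => rw [pow_zero, Module.End.one_eq_id, Submodule.map_id]
    | succ j ih =>
      rw [pow_succ, Module.End.mul_eq_comp, Submodule.map_comp, hψW, ih]
  have hAdW : Submodule.map LAd W = W := by
    rw [hψpow k] at hk; exact hk
  constructor
  · have hset := congrArg (fun (S : Submodule ℝ E) => (S : Set E)) hψW
    simp only [Submodule.map_coe] at hset
    exact hset
  · have hset := congrArg (fun (S : Submodule ℝ E) => (S : Set E)) hAdW
    simp only [Submodule.map_coe] at hset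
    exact hset
end

section
/- With the same setup, the maximal subspace W is a Lie subalgebra of 𝔤: for all X, Y ∈ W one has [Y, X] ∈ W. -/
open Manifold Pointwise
open scoped ContDiff

set_option linter.unusedSectionVars false
set_option maxHeartbeats 1000000

section Aux
variable {E : Type*} [NormedAddCommGroup E] [NormedSpace ℝ E]
variable {H : Type*} [TopologicalSpace H] (I : ModelWithCorners ℝ E H)
variable {G : Type*} [TopologicalSpace G] [ChartedSpace H G] [Group G] [LieGroup I ∞ G]

noncomputable def AdL (g : G) : E →L[ℝ] E := mfderiv I I (fun x => g * x * g⁻¹) (1 : G)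

/-- Derivative at the identity of a map `G → G` fixing `1`. -/
noncomputable def D1 (Ψ : G → G) : E →L[ℝ] E := mfderiv I I Ψ (1 : G)

lemma smooth_conj (g : G) : ContMDiff I I ∞ (fun x : G => g * x * g⁻¹) :=
  (contMDiff_mul_left (a := g)).mul contMDiff_const

lemma AdL_one : AdL I (1 : G) = ContinuousLinearMap.id ℝ E := by
  have h : (fun x : G => (1:G) * x * (1:G)⁻¹) = id := by funext x; simp
  rw [AdL, h, mfderiv_id]
  rfl

lemma AdL_mul (g h : G) : AdL I (g * h) = (AdL I g).comp (AdL I h) := by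
  have hc : (fun x : G => (g*h) * x * (g*h)⁻¹)
      = (fun x : G => g * x * g⁻¹) ∘ (fun x : G => h * x * h⁻¹) := by
    funext x; simp [Function.comp, mul_assoc]
  have h1 : MDifferentiableAt I I (fun x : G => g * x * g⁻¹) ((fun x : G => h * x * h⁻¹) 1) :=
    (smooth_conj I g).mdifferentiableAt (by simp)
  have h2 : MDifferentiableAt I I (fun x : G => h * x * h⁻¹) (1 : G) :=
    (smooth_conj I h).mdifferentiableAt (by simp)
  have h3 := mfderiv_comp (I := I) (I' := I) (I'' := I) (1 : G) h1 h2
  have hpt : h * 1 * h⁻¹ = 1 := by simp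
  rw [hpt] at h3
  rw [AdL, hc, h3]
  rfl

lemma AdL_inv_comp (g : G) : (AdL I g⁻¹).comp (AdL I g) = ContinuousLinearMap.id ℝ E := by
  rw [← AdL_mul, inv_mul_cancel, AdL_one]

lemma AdL_comp_inv (g : G) : (AdL I g).comp (AdL I g⁻¹) = ContinuousLinearMap.id ℝ E := by
  rw [← AdL_mul, mul_inv_cancel, AdL_one]

variable {V : Type*} [NormedAddCommGroup V] [NormedSpace ℝ V]

/-- The right-translated derivative of a family. -/
noncomputable def Theta (f : V → G) (x : V) (v : V) : E :=
  mfderiv I I (fun h => h * (f x)⁻¹) (f x) (mfderiv 𝓘(ℝ, V) I f x v)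

lemma theta_eq_comp {f : V → G} (hf : ContMDiff 𝓘(ℝ, V) I ∞ f) (x : V) (v : V) :
    Theta I f x v = mfderiv 𝓘(ℝ, V) I ((fun h => h * (f x)⁻¹) ∘ f) x v := by
  rw [mfderiv_comp x ((contMDiff_mul_right (n := ∞) (a := (f x)⁻¹)).mdifferentiableAt (by simp))
    (hf.mdifferentiableAt (by simp))]
  rfl

/-- L1 : left/right constant multiplication of a family. -/
lemma theta_conj {f : V → G} (hf : ContMDiff 𝓘(ℝ, V) I ∞ f) (a b : G) (x : V) (v : V) :
    Theta I (fun y => a * f y * b) x v = AdL I a (Theta I f x v) := by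
  have hP : ContMDiff 𝓘(ℝ, V) I ∞ (fun y => a * f y * b) :=
    ((contMDiff_const.mul hf).mul contMDiff_const)
  rw [theta_eq_comp I hP, theta_eq_comp I hf]
  have hfun : ((fun h => h * ((fun y => a * f y * b) x)⁻¹) ∘ (fun y => a * f y * b))
      = (fun x : G => a * x * a⁻¹) ∘ ((fun h => h * (f x)⁻¹) ∘ f) := by
    funext y
    simp only [Function.comp]
    group
  rw [hfun]
  have hg : MDifferentiableAt 𝓘(ℝ, V) I ((fun h => h * (f x)⁻¹) ∘ f) x :=
    (((contMDiff_mul_right (a := (f x)⁻¹)).comp hf)).mdifferentiableAt (by simp)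
  have h3 := mfderiv_comp (I := 𝓘(ℝ, V)) (I' := I) (I'' := I) x
    ((smooth_conj I a).mdifferentiableAt (by simp)) hg
  have hpt : ((fun h => h * (f x)⁻¹) ∘ f) x = 1 := by
    simp [Function.comp]
  rw [hpt] at h3
  rw [h3]
  rfl

/-- L2 : postcomposition with a smooth homomorphism. -/
lemma theta_hom {f : V → G} (hf : ContMDiff 𝓘(ℝ, V) I ∞ f)
    {Ψ : G → G} (hΨ : ContMDiff I I ∞ Ψ) (hhom : ∀ a b : G, Ψ (a * b) = Ψ a * Ψ b)
    (x : V) (v : V) :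
    Theta I (fun y => Ψ (f y)) x v = D1 I Ψ (Theta I f x v) := by
  have hone : Ψ 1 = 1 := by
    have := hhom 1 1
    rw [mul_one] at this
    exact right_eq_mul.mp this
  have hinv : ∀ g : G, Ψ g⁻¹ = (Ψ g)⁻¹ := by
    intro g
    have : Ψ g⁻¹ * Ψ g = 1 := by rw [← hhom, inv_mul_cancel, hone]
    exact eq_inv_of_mul_eq_one_left this
  have hQ : ContMDiff 𝓘(ℝ, V) I ∞ (fun y => Ψ (f y)) := hΨ.comp hf
  rw [theta_eq_comp I hQ, theta_eq_comp I hf]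
  have hfun : ((fun h => h * ((fun y => Ψ (f y)) x)⁻¹) ∘ (fun y => Ψ (f y)))
      = Ψ ∘ ((fun h => h * (f x)⁻¹) ∘ f) := by
    funext y
    simp only [Function.comp, ← hinv, ← hhom]
  rw [hfun]
  have hg : MDifferentiableAt 𝓘(ℝ, V) I ((fun h => h * (f x)⁻¹) ∘ f) x :=
    (((contMDiff_mul_right (a := (f x)⁻¹)).comp hf)).mdifferentiableAt (by simp)
  have h3 := mfderiv_comp (I := 𝓘(ℝ, V)) (I' := I) (I'' := I) x
    (hΨ.mdifferentiableAt (by simp)) hg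
  have hpt : ((fun h => h * (f x)⁻¹) ∘ f) x = 1 := by simp [Function.comp]
  rw [hpt] at h3
  rw [h3]
  rfl

/-- L3 : precomposition with an affine map. -/
lemma theta_affine {f : V → G} (hf : ContMDiff 𝓘(ℝ, V) I ∞ f)
    {V' : Type*} [NormedAddCommGroup V'] [NormedSpace ℝ V'] (z : V) (L : V' →L[ℝ] V)
    (x : V') (v : V') :
    Theta I (fun y => f (z + L y)) x v = Theta I f (z + L x) (L v) := by
  have hρ : ContMDiff 𝓘(ℝ, V') 𝓘(ℝ, V) ∞ (fun y : V' => z + L y) :=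
    contMDiff_const.add L.contMDiff
  have hd : mfderiv 𝓘(ℝ, V') 𝓘(ℝ, V) (fun y : V' => z + L y) x = L := by
    rw [mfderiv_eq_fderiv]
    rw [fderiv_const_add]
    exact L.fderiv
  have h3 := mfderiv_comp (I := 𝓘(ℝ, V')) (I' := 𝓘(ℝ, V)) (I'' := I) x
    (hf.mdifferentiableAt (by simp)) (hρ.mdifferentiableAt (by simp))
  unfold Theta
  rw [show (fun y => f (z + L y)) = f ∘ (fun y : V' => z + L y) from rfl, h3, hd]
  rfl

/-- F4 : `Ad(Ψ g) ∘ dΨ₁ = dΨ₁ ∘ Ad g` for a smooth homomorphism `Ψ`. -/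
lemma adL_hom_comm {Ψ : G → G} (hΨ : ContMDiff I I ∞ Ψ)
    (hhom : ∀ a b : G, Ψ (a * b) = Ψ a * Ψ b) (g : G) :
    (AdL I (Ψ g)).comp (D1 I Ψ) = (D1 I Ψ).comp (AdL I g) := by
  have hone : Ψ 1 = 1 := by
    have := hhom 1 1; rw [mul_one] at this; exact right_eq_mul.mp this
  have hinv : ∀ x : G, Ψ x⁻¹ = (Ψ x)⁻¹ := by
    intro x
    have : Ψ x⁻¹ * Ψ x = 1 := by rw [← hhom, inv_mul_cancel, hone]
    exact eq_inv_of_mul_eq_one_left this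
  have hfun : (fun x : G => Ψ g * x * (Ψ g)⁻¹) ∘ Ψ = Ψ ∘ (fun x : G => g * x * g⁻¹) := by
    funext x
    simp only [Function.comp]
    rw [hhom (g * x) g⁻¹, hhom g x, hinv g]
  have h1 := mfderiv_comp (I := I) (I' := I) (I'' := I) (1 : G)
    ((smooth_conj I (Ψ g)).mdifferentiableAt (by simp) (x := Ψ 1)) (hΨ.mdifferentiableAt (by simp))
  have h2 := mfderiv_comp (I := I) (I' := I) (I'' := I) (1 : G)
    (hΨ.mdifferentiableAt (by simp) (x := (fun x : G => g * x * g⁻¹) 1))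
    ((smooth_conj I g).mdifferentiableAt (by simp))
  rw [hone] at h1
  rw [show g * 1 * g⁻¹ = 1 by simp] at h2
  unfold AdL D1
  rw [hfun] at h1
  exact h1.symm.trans h2

/-- Derivative at `0` of a pointwise product of two curves through `1`. -/
lemma mfderiv_curve_mul {c₁ c₂ : ℝ → G} (h₁ : ContMDiff 𝓘(ℝ, ℝ) I ∞ c₁)
    (h₂ : ContMDiff 𝓘(ℝ, ℝ) I ∞ c₂) (e₁ : c₁ 0 = 1) (e₂ : c₂ 0 = 1)
    (Y₁ Y₂ : E) (d₁ : mfderiv 𝓘(ℝ, ℝ) I c₁ 0 (1 : ℝ) = Y₁)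
    (d₂ : mfderiv 𝓘(ℝ, ℝ) I c₂ 0 (1 : ℝ) = Y₂) :
    mfderiv 𝓘(ℝ, ℝ) I (fun t => c₁ t * c₂ t) 0 (1 : ℝ) = Y₁ + Y₂ := by
  have hμ : ContMDiff (I.prod I) I ∞ (fun p : G × G => p.1 * p.2) := contMDiff_mul I ∞
  have hh : ContMDiff 𝓘(ℝ, ℝ) (I.prod I) ∞ (fun t => (c₁ t, c₂ t)) := h₁.prodMk h₂
  have hcomp := mfderiv_comp (I := 𝓘(ℝ, ℝ)) (I' := I.prod I) (I'' := I) (0 : ℝ)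
    (hμ.mdifferentiableAt (by simp) (x := (c₁ 0, c₂ 0))) (hh.mdifferentiableAt (by simp))
  have hprod : mfderiv 𝓘(ℝ, ℝ) (I.prod I) (fun t => (c₁ t, c₂ t)) 0
      = (mfderiv 𝓘(ℝ, ℝ) I c₁ 0).prod (mfderiv 𝓘(ℝ, ℝ) I c₂ 0) :=
    (h₁.mdifferentiableAt (by simp)).mfderiv_prod (h₂.mdifferentiableAt (by simp))
  have happ := mfderiv_prod_eq_add_apply (I := I) (I' := I) (I'' := I)
    (f := fun p : G × G => p.1 * p.2) (p := (c₁ 0, c₂ 0))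
    (v := (mfderiv 𝓘(ℝ, ℝ) I c₁ 0 (1:ℝ), mfderiv 𝓘(ℝ, ℝ) I c₂ 0 (1:ℝ)))
    (hμ.mdifferentiableAt (by simp))
  have step : mfderiv 𝓘(ℝ, ℝ) I (fun t => c₁ t * c₂ t) 0 (1 : ℝ)
      = mfderiv (I.prod I) I (fun p : G × G => p.1 * p.2) (c₁ 0, c₂ 0)
          (mfderiv 𝓘(ℝ, ℝ) I c₁ 0 (1:ℝ), mfderiv 𝓘(ℝ, ℝ) I c₂ 0 (1:ℝ)) := by
    rw [show (fun t => c₁ t * c₂ t)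
        = (fun p : G × G => p.1 * p.2) ∘ (fun t => (c₁ t, c₂ t)) from rfl, hcomp]
    erw [ContinuousLinearMap.comp_apply, hprod]
    rfl
  rw [step, happ]
  have k₁ : mfderiv I I (fun z : G => z * (c₂ 0)) (c₁ 0)
      = mfderiv I I (fun z : G => z * 1) (1 : G) := by rw [e₁, e₂]
  have k₂ : mfderiv I I (fun z : G => (c₁ 0) * z) (c₂ 0)
      = mfderiv I I (fun z : G => (1:G) * z) (1 : G) := by rw [e₁, e₂]
  simp only []
  rw [k₁, k₂, d₁, d₂]
  rw [show (fun z : G => z * 1) = id from by funext z; simp,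
      show (fun z : G => (1:G) * z) = id from by funext z; simp, mfderiv_id]
  rfl

/-- Translation version of `theta_affine`. -/
lemma theta_translate {f : V → G} (hf : ContMDiff 𝓘(ℝ, V) I ∞ f) (z : V) (x v : V) :
    Theta I (fun y => f (z + y)) x v = Theta I f (z + x) v := by
  have hρ : ContMDiff 𝓘(ℝ, V) 𝓘(ℝ, V) ∞ (fun y : V => z + y) :=
    contMDiff_const.add contMDiff_id
  have hd : mfderiv 𝓘(ℝ, V) 𝓘(ℝ, V) (fun y : V => z + y) x = ContinuousLinearMap.id ℝ V := by
    rw [mfderiv_eq_fderiv, fderiv_const_add, fderiv_id']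
  have h3 := mfderiv_comp (I := 𝓘(ℝ, V)) (I' := 𝓘(ℝ, V)) (I'' := I) x
    (hf.mdifferentiableAt (by simp)) (hρ.mdifferentiableAt (by simp))
  unfold Theta
  rw [show (fun y => f (z + y)) = f ∘ (fun y : V => z + y) from rfl, h3, hd]
  rfl

/-- C3 : derivative of the basic generator curve. -/
lemma mfderiv_gen_curve {f : V → G} (hf : ContMDiff 𝓘(ℝ, V) I ∞ f) (y : V) :
    mfderiv 𝓘(ℝ, ℝ) I (fun t : ℝ => f (t • y) * (f 0)⁻¹) 0 (1 : ℝ) = Theta I f 0 y := by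
  set L : ℝ →L[ℝ] V := (ContinuousLinearMap.id ℝ ℝ).smulRight y with hL
  have hρ : ContMDiff 𝓘(ℝ, ℝ) 𝓘(ℝ, V) ∞ (fun t : ℝ => t • y) := L.contMDiff
  have hdL : mfderiv 𝓘(ℝ, ℝ) 𝓘(ℝ, V) (fun t : ℝ => t • y) 0 = L := by
    rw [show (fun t : ℝ => t • y) = ⇑L from rfl, mfderiv_eq_fderiv, L.fderiv]
  have hin : ContMDiff 𝓘(ℝ, ℝ) I ∞ (fun t : ℝ => f (t • y)) := hf.comp hρ
  have h1 := mfderiv_comp (I := 𝓘(ℝ, ℝ)) (I' := I) (I'' := I) (0 : ℝ)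
    ((contMDiff_mul_right (n := ∞) (a := (f 0)⁻¹)).mdifferentiableAt (by simp) (x := f ((0:ℝ) • y)))
    (hin.mdifferentiableAt (by simp))
  have h2 := mfderiv_comp (I := 𝓘(ℝ, ℝ)) (I' := 𝓘(ℝ, V)) (I'' := I) (0 : ℝ)
    (hf.mdifferentiableAt (by simp) (x := (0:ℝ) • y)) (hρ.mdifferentiableAt (by simp))
  rw [show ((0:ℝ) • y) = (0:V) from zero_smul ℝ y] at h1 h2
  rw [show (fun t : ℝ => f (t • y) * (f 0)⁻¹)
      = (fun h => h * (f 0)⁻¹) ∘ (fun t : ℝ => f (t • y)) from rfl, h1]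
  rw [show (fun t : ℝ => f (t • y)) = f ∘ (fun t : ℝ => t • y) from rfl, h2, hdL]
  show mfderiv I I (fun h => h * (f 0)⁻¹) (f 0)
      (mfderiv 𝓘(ℝ, V) I f 0 ((1:ℝ) • y)) = Theta I f 0 y
  rw [one_smul]
  rfl

/-- C2 : derivative of a rescaled curve. -/
lemma mfderiv_curve_rescale {c : ℝ → G} (hc : ContMDiff 𝓘(ℝ, ℝ) I ∞ c) (a : ℝ) (Y : E)
    (d : mfderiv 𝓘(ℝ, ℝ) I c 0 (1 : ℝ) = Y) :
    mfderiv 𝓘(ℝ, ℝ) I (fun t : ℝ => c (a * t)) 0 (1 : ℝ) = a • Y := by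
  set L : ℝ →L[ℝ] ℝ := a • ContinuousLinearMap.id ℝ ℝ with hL
  have hρ : ContMDiff 𝓘(ℝ, ℝ) 𝓘(ℝ, ℝ) ∞ (fun t : ℝ => a * t) := L.contMDiff
  have hdL : mfderiv 𝓘(ℝ, ℝ) 𝓘(ℝ, ℝ) (fun t : ℝ => a * t) 0 = L := by
    rw [show (fun t : ℝ => a * t) = ⇑L from rfl, mfderiv_eq_fderiv, L.fderiv]
  have h2 := mfderiv_comp (I := 𝓘(ℝ, ℝ)) (I' := 𝓘(ℝ, ℝ)) (I'' := I) (0 : ℝ)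
    (hc.mdifferentiableAt (by simp) (x := a * (0:ℝ))) (hρ.mdifferentiableAt (by simp))
  rw [show a * (0:ℝ) = 0 from mul_zero a] at h2
  rw [show (fun t : ℝ => c (a * t)) = c ∘ (fun t : ℝ => a * t) from rfl, h2, hdL]
  show mfderiv 𝓘(ℝ, ℝ) I c 0 (a • (1:ℝ)) = a • Y
  erw [ContinuousLinearMap.map_smul, d]
  rfl

/-- Composition with an inverse at the identity. -/
lemma D1_comp_apply {Ψ Φ : G → G} (hΨ : ContMDiff I I ∞ Ψ) (hΦ : ContMDiff I I ∞ Φ)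
    (h : ∀ x, Φ (Ψ x) = x) (h1 : Ψ 1 = 1) (u : E) :
    D1 I Φ (D1 I Ψ u) = u := by
  have hfun : Φ ∘ Ψ = id := funext h
  have h3 := mfderiv_comp (I := I) (I' := I) (I'' := I) (1 : G)
    (hΦ.mdifferentiableAt (by simp) (x := Ψ 1)) (hΨ.mdifferentiableAt (by simp))
  rw [h1] at h3
  rw [hfun, mfderiv_id] at h3
  have := congrFun (congrArg (fun (T : _ →L[ℝ] _) => (T : _ → _)) h3.symm) u
  exact this

/-- Stability of a submodule under a linear map checked on a spanning set. -/
lemma span_stable {W : Submodule ℝ E} {S : Set E} (hspan : W = Submodule.span ℝ S)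
    (T : E →L[ℝ] E) (h : ∀ s ∈ S, T s ∈ W) : ∀ u ∈ W, T u ∈ W := by
  intro u hu
  have hmap : Submodule.map (T : E →ₗ[ℝ] E) W ≤ W := by
    rw [hspan, Submodule.map_span, ← hspan]
    apply Submodule.span_le.2
    rintro _ ⟨s, hs, rfl⟩
    exact h s hs
  exact hmap ⟨u, hu, rfl⟩

/-- Smoothness of iterates. -/
lemma iterate_contMDiff {Ψ : G → G} (hΨ : ContMDiff I I ∞ Ψ) :
    ∀ j : ℕ, ContMDiff I I ∞ (Ψ^[j])
  | 0 => contMDiff_id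
  | (j+1) => by
      rw [Function.iterate_succ']
      exact hΨ.comp (iterate_contMDiff hΨ j)

end Aux

section GroupAux
variable {G : Type*} [Group G]

lemma myIterate_map_mul (ψ : G ≃* G) : ∀ (j : ℕ) (a b : G),
    (⇑ψ)^[j] (a * b) = (⇑ψ)^[j] a * (⇑ψ)^[j] b
  | 0, a, b => rfl
  | (j+1), a, b => by
      rw [Function.iterate_succ_apply', Function.iterate_succ_apply',
        Function.iterate_succ_apply', myIterate_map_mul ψ j a b, map_mul]

lemma myIterate_map_one (ψ : G ≃* G) : ∀ j : ℕ, (⇑ψ)^[j] (1 : G) = 1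
  | 0 => rfl
  | (j+1) => by rw [Function.iterate_succ_apply', myIterate_map_one ψ j, map_one]

lemma iterate_symm_iterate (ψ : G ≃* G) (j : ℕ) (x : G) :
    (⇑ψ.symm)^[j] ((⇑ψ)^[j] x) = x :=
  (Function.LeftInverse.iterate ψ.symm_apply_apply j) x

lemma iterate_iterate_symm (ψ : G ≃* G) (j : ℕ) (x : G) :
    (⇑ψ)^[j] ((⇑ψ.symm)^[j] x) = x :=
  (Function.LeftInverse.iterate ψ.apply_symm_apply j) x

end GroupAux

/-- Reachable sets multiply : `R_j · ψ^[j](R_l) ⊆ R_{j+l}`. -/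
lemma Rset_mul_mem {G : Type*} [Group G] {α : Type*} (U : Set α) (F : α → G) (ψ : G ≃* G) :
    ∀ (j l : ℕ) (a b : G), a ∈ Rset U F (⇑ψ) j → b ∈ Rset U F (⇑ψ) l →
      a * (⇑ψ)^[j] b ∈ Rset U F (⇑ψ) (j + l)
  | 0, l, a, b, ha, hb => by
      have : a = 1 := by simpa [Rset] using ha
      subst this
      rw [Nat.zero_add]
      simpa using hb
  | (j+1), l, a, b, ha, hb => by
      rw [show j + 1 + l = (j + l) + 1 from Nat.succ_add j l]
      rw [show Rset U F (⇑ψ) (j+1) = (F '' U) * ((⇑ψ) '' Rset U F (⇑ψ) j) from rfl] at ha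
      obtain ⟨x, hx, y, hy, rfl⟩ := Set.mem_mul.mp ha
      obtain ⟨a', ha', rfl⟩ := hy
      have key : x * ψ a' * (⇑ψ)^[j+1] b = x * ψ (a' * (⇑ψ)^[j] b) := by
        rw [Function.iterate_succ_apply', map_mul, mul_assoc]
      rw [key]
      exact Set.mul_mem_mul hx (Set.mem_image_of_mem _ (Rset_mul_mem U F ψ j l a' b ha' hb))

section FinAux
variable {d : ℕ}

lemma finAppend_add {m n : ℕ} (u v : Fin m → ℝ) (w x : Fin n → ℝ) :
    Fin.append (u + v) (w + x) = Fin.append u w + Fin.append v x := by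
  funext j
  refine Fin.addCases (fun i => ?_) (fun i => ?_) j <;>
    simp [Fin.append_left, Fin.append_right]

lemma finAppend_smul {m n : ℕ} (a : ℝ) (u : Fin m → ℝ) (w : Fin n → ℝ) :
    Fin.append (a • u) (a • w) = a • Fin.append u w := by
  funext j
  refine Fin.addCases (fun i => ?_) (fun i => ?_) j <;>
    simp [Fin.append_left, Fin.append_right]

/-- The three block inclusions `ℝ^d → ℝ^{(d+d)+d}` as continuous linear maps. -/
noncomputable def blk1 (d : ℕ) : (Fin d → ℝ) →L[ℝ] (Fin (d + d + d) → ℝ) :=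
  LinearMap.toContinuousLinearMap
    { toFun := fun v => Fin.append (Fin.append v (0 : Fin d → ℝ)) (0 : Fin d → ℝ)
      map_add' := fun v w => by
        show Fin.append (Fin.append (v + w) (0 : Fin d → ℝ)) (0 : Fin d → ℝ) = _
        rw [show ((Fin.append (Fin.append v (0 : Fin d → ℝ)) (0 : Fin d → ℝ))
              + (Fin.append (Fin.append w (0 : Fin d → ℝ)) (0 : Fin d → ℝ)))
            = Fin.append (Fin.append v (0 : Fin d → ℝ) + Fin.append w (0 : Fin d → ℝ))
              ((0 : Fin d → ℝ) + 0) from (finAppend_add _ _ _ _).symm,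
          show (Fin.append v (0 : Fin d → ℝ) + Fin.append w (0 : Fin d → ℝ))
            = Fin.append (v + w) ((0 : Fin d → ℝ) + 0) from
          (finAppend_add _ _ _ _).symm, add_zero]
      map_smul' := fun a v => by
        show Fin.append (Fin.append (a • v) (0 : Fin d → ℝ)) (0 : Fin d → ℝ) = _
        simp only [RingHom.id_apply]
        rw [show a • Fin.append (Fin.append v 0) (0 : Fin d → ℝ)
            = Fin.append (a • Fin.append v 0) (a • (0 : Fin d → ℝ)) from
          (finAppend_smul _ _ _).symm,
          show a • Fin.append v (0 : Fin d → ℝ) = Fin.append (a • v) (a • (0 : Fin d → ℝ)) from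
          (finAppend_smul _ _ _).symm, smul_zero]  }

noncomputable def blk2 (d : ℕ) : (Fin d → ℝ) →L[ℝ] (Fin (d + d + d) → ℝ) :=
  LinearMap.toContinuousLinearMap
    { toFun := fun v => Fin.append (Fin.append (0 : Fin d → ℝ) v) (0 : Fin d → ℝ)
      map_add' := fun v w => by
        show Fin.append (Fin.append (0 : Fin d → ℝ) (v + w)) (0 : Fin d → ℝ) = _
        rw [show ((Fin.append (Fin.append (0:Fin d → ℝ) v) (0:Fin d → ℝ))
              + (Fin.append (Fin.append (0:Fin d → ℝ) w) (0:Fin d → ℝ)))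
            = Fin.append (Fin.append (0:Fin d → ℝ) v + Fin.append (0:Fin d → ℝ) w)
              ((0:Fin d → ℝ) + 0) from
          (finAppend_add _ _ _ _).symm,
          show (Fin.append (0:Fin d → ℝ) v + Fin.append (0:Fin d → ℝ) w)
            = Fin.append ((0:Fin d → ℝ) + 0) (v + w) from
          (finAppend_add _ _ _ _).symm, add_zero]
      map_smul' := fun a v => by
        show Fin.append (Fin.append (0 : Fin d → ℝ) (a • v)) (0 : Fin d → ℝ) = _
        simp only [RingHom.id_apply]
        rw [show a • Fin.append (Fin.append (0:Fin d → ℝ) v) (0 : Fin d → ℝ)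
            = Fin.append (a • Fin.append (0:Fin d → ℝ) v) (a • (0 : Fin d → ℝ)) from
          (finAppend_smul _ _ _).symm,
          show a • Fin.append (0:Fin d → ℝ) v = Fin.append (a • (0:Fin d → ℝ)) (a • v) from
          (finAppend_smul _ _ _).symm, smul_zero]  }

noncomputable def blk3 (d : ℕ) : (Fin d → ℝ) →L[ℝ] (Fin (d + d + d) → ℝ) :=
  LinearMap.toContinuousLinearMap
    { toFun := fun v => Fin.append (0 : Fin (d + d) → ℝ) v
      map_add' := fun v w => by
        show Fin.append (0 : Fin (d+d) → ℝ) (v + w) = _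
        rw [show (Fin.append (0:Fin (d+d) → ℝ) v + Fin.append (0:Fin (d+d) → ℝ) w)
            = Fin.append ((0:Fin (d+d) → ℝ) + 0) (v + w) from (finAppend_add _ _ _ _).symm,
          add_zero]
      map_smul' := fun a v => by
        show Fin.append (0 : Fin (d+d) → ℝ) (a • v) = _
        simp only [RingHom.id_apply]
        rw [show a • Fin.append (0:Fin (d+d) → ℝ) v
            = Fin.append (a • (0:Fin (d+d) → ℝ)) (a • v) from (finAppend_smul _ _ _).symm,
          smul_zero]  }

@[simp] lemma blk1_apply (v : Fin d → ℝ) :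
    blk1 d v = Fin.append (Fin.append v (0 : Fin d → ℝ)) (0 : Fin d → ℝ) := rfl
@[simp] lemma blk2_apply (v : Fin d → ℝ) :
    blk2 d v = Fin.append (Fin.append (0 : Fin d → ℝ) v) (0 : Fin d → ℝ) := rfl
@[simp] lemma blk3_apply (v : Fin d → ℝ) :
    blk3 d v = Fin.append (0 : Fin (d + d) → ℝ) v := rfl

/-- Coordinate projections. -/
noncomputable def prj1 (d : ℕ) : (Fin (d + d + d) → ℝ) → (Fin d → ℝ) :=
  fun y i => y (Fin.castAdd d (Fin.castAdd d i))
noncomputable def prj2 (d : ℕ) : (Fin (d + d + d) → ℝ) → (Fin d → ℝ) :=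
  fun y i => y (Fin.castAdd d (Fin.natAdd d i))
noncomputable def prj3 (d : ℕ) : (Fin (d + d + d) → ℝ) → (Fin d → ℝ) :=
  fun y i => y (Fin.natAdd (d + d) i)

lemma prj_contMDiff1 : ContMDiff 𝓘(ℝ, Fin (d+d+d) → ℝ) 𝓘(ℝ, Fin d → ℝ) ∞ (prj1 d) :=
  (LinearMap.funLeft ℝ ℝ (fun i => Fin.castAdd d (Fin.castAdd d i))).toContinuousLinearMap.contMDiff
lemma prj_contMDiff2 : ContMDiff 𝓘(ℝ, Fin (d+d+d) → ℝ) 𝓘(ℝ, Fin d → ℝ) ∞ (prj2 d) :=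
  (LinearMap.funLeft ℝ ℝ (fun i => Fin.castAdd d (Fin.natAdd d i))).toContinuousLinearMap.contMDiff
lemma prj_contMDiff3 : ContMDiff 𝓘(ℝ, Fin (d+d+d) → ℝ) 𝓘(ℝ, Fin d → ℝ) ∞ (prj3 d) :=
  (LinearMap.funLeft ℝ ℝ (fun i => Fin.natAdd (d+d) i)).toContinuousLinearMap.contMDiff

@[simp] lemma prj1_blk1 (v : Fin d → ℝ) : prj1 d (blk1 d v) = v := by
  funext i; simp only [prj1, blk1_apply, blk2_apply, blk3_apply, Fin.append_left, Pi.zero_apply]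
@[simp] lemma prj2_blk1 (v : Fin d → ℝ) : prj2 d (blk1 d v) = 0 := by
  funext i; simp only [prj2, blk1_apply, blk2_apply, Fin.append_left, Fin.append_right, Pi.zero_apply]
@[simp] lemma prj3_blk1 (v : Fin d → ℝ) : prj3 d (blk1 d v) = 0 := by
  funext i; simp only [prj3, blk1_apply, blk2_apply, blk3_apply, Fin.append_right, Pi.zero_apply]
@[simp] lemma prj1_blk2 (v : Fin d → ℝ) : prj1 d (blk2 d v) = 0 := by
  funext i; simp only [prj1, blk1_apply, blk2_apply, blk3_apply, Fin.append_left, Pi.zero_apply]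
@[simp] lemma prj2_blk2 (v : Fin d → ℝ) : prj2 d (blk2 d v) = v := by
  funext i; simp only [prj2, blk1_apply, blk2_apply, Fin.append_left, Fin.append_right, Pi.zero_apply]
@[simp] lemma prj3_blk2 (v : Fin d → ℝ) : prj3 d (blk2 d v) = 0 := by
  funext i; simp only [prj3, blk1_apply, blk2_apply, blk3_apply, Fin.append_right, Pi.zero_apply]
@[simp] lemma prj1_blk3 (v : Fin d → ℝ) : prj1 d (blk3 d v) = 0 := by
  funext i; simp only [prj1, blk1_apply, blk2_apply, blk3_apply, Fin.append_left, Pi.zero_apply]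
@[simp] lemma prj2_blk3 (v : Fin d → ℝ) : prj2 d (blk3 d v) = 0 := by
  funext i; simp only [prj2, blk3_apply, Fin.append_left, Fin.append_right, Pi.zero_apply]
@[simp] lemma prj3_blk3 (v : Fin d → ℝ) : prj3 d (blk3 d v) = v := by
  funext i; simp only [prj3, blk1_apply, blk2_apply, blk3_apply, Fin.append_right, Pi.zero_apply]

end FinAux

/-- In the accessibility setup, the maximal subspace `W` (the image of
`d̂f_0` for a maximizing `f ∈ ℱ`) is a Lie subalgebra of `𝔤`: for all `X, Y ∈ W` one has
`[Y, X] ∈ W`.  Here the Lie bracket `lb` on `𝔤 ≅ E` is characterized by its defining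
property `d/dt|₀ Ad(c t)(Z) = [ċ(0), Z]` for smooth curves `c` through the identity. -/
theorem maximal_subspace_is_subalgebra {m : ℕ}
    {E : Type*} [NormedAddCommGroup E] [NormedSpace ℝ E] [FiniteDimensional ℝ E]
    {H : Type*} [TopologicalSpace H] (I : ModelWithCorners ℝ E H)
    {G : Type*} [TopologicalSpace G] [ChartedSpace H G] [Group G] [LieGroup I (⊤ : ℕ∞) G]
    [ConnectedSpace G]
    (ψ : G ≃* G) (hψ : ContMDiff I I (⊤ : ℕ∞) ψ) (hψ' : ContMDiff I I (⊤ : ℕ∞) ψ.symm)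
    (U : Set (Fin m → ℝ)) (hUopen : IsOpen U) (hUconn : IsConnected U) (hU0 : (0 : Fin m → ℝ) ∈ U)
    (F : (Fin m → ℝ) → G) (hF : ContMDiffOn 𝓘(ℝ, Fin m → ℝ) I 1 F U)
    (hF0 : F 0 = 1)
    (k d : ℕ) (f : (Fin d → ℝ) → G) (hf : ContMDiff 𝓘(ℝ, Fin d → ℝ) I (⊤ : ℕ∞) f)
    (hfR : Set.range f ⊆ Rset U F (⇑ψ) k)
    (W : Submodule ℝ E)
    (hW : W = Submodule.span ℝ (Set.range fun y : Fin d → ℝ =>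
      mfderiv I I (fun h => h * (f 0)⁻¹) (f 0)
        (mfderiv 𝓘(ℝ, Fin d → ℝ) I f 0 y)))
    (hmax : ∀ (k' d' : ℕ) (f' : (Fin d' → ℝ) → G),
      ContMDiff 𝓘(ℝ, Fin d' → ℝ) I (⊤ : ℕ∞) f' → Set.range f' ⊆ Rset U F (⇑ψ) k' →
      Module.finrank ℝ (Submodule.span ℝ (Set.range fun y : Fin d' → ℝ =>
          mfderiv I I (fun h => h * (f' 0)⁻¹) (f' 0)
            (mfderiv 𝓘(ℝ, Fin d' → ℝ) I f' 0 y)))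
        ≤ Module.finrank ℝ W)
    (lb : E → E → E)
    (hlb : ∀ (Y Z : E) (c : ℝ → G), ContMDiff 𝓘(ℝ, ℝ) I (⊤ : ℕ∞) c → c 0 = 1 →
      mfderiv 𝓘(ℝ, ℝ) I c 0 (1 : ℝ) = Y →
      HasDerivAt (fun t : ℝ => mfderiv I I (fun x => c t * x * (c t)⁻¹) (1 : G) Z)
        (lb Y Z) 0) :
    ∀ X ∈ W, ∀ Y ∈ W, lb Y X ∈ W := by

  have hΨks : ContMDiff I I ∞ ((⇑ψ)^[k]) := iterate_contMDiff I hψ k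
  have hΨks' : ContMDiff I I ∞ ((⇑ψ.symm)^[k]) := iterate_contMDiff I hψ' k
  have hΨkhom : ∀ a b : G, (⇑ψ)^[k] (a * b) = (⇑ψ)^[k] a * (⇑ψ)^[k] b := myIterate_map_mul ψ k
  have hWspan : W = Submodule.span ℝ (Set.range fun v : Fin d → ℝ => Theta I f 0 v) := hW
  -- the big generator computation for the 3-block family
  have gen : ∀ z : Fin d → ℝ,
      (∀ v, AdL I (f 0) (D1 I ((⇑ψ)^[k]) (Theta I f z v)) ∈ W)
      ∧ (∀ v, AdL I (f 0 * (⇑ψ)^[k] (f z))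
          (D1 I ((⇑ψ)^[k]) (D1 I ((⇑ψ)^[k]) (Theta I f 0 v))) ∈ W) := by
    intro z
    set F3 : (Fin (d + d + d) → ℝ) → G :=
      fun y => f (prj1 d y) * (⇑ψ)^[k] (f (z + prj2 d y) * (⇑ψ)^[k] (f (prj3 d y))) with hF3
    have htr : ContMDiff 𝓘(ℝ, Fin d → ℝ) 𝓘(ℝ, Fin d → ℝ) ∞ (fun y : Fin d → ℝ => z + y) :=
      contMDiff_iff_contDiff.mpr (contDiff_const.add contDiff_id)
    have hp2 : ContMDiff 𝓘(ℝ, Fin (d+d+d) → ℝ) 𝓘(ℝ, Fin d → ℝ) ∞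
        (fun y => z + prj2 d y) :=
      contMDiff_iff_contDiff.mpr (contDiff_const.add
        (contMDiff_iff_contDiff.mp (prj_contMDiff2 (d := d))))
    have hs : ContMDiff 𝓘(ℝ, Fin (d+d+d) → ℝ) I ∞ F3 := by
      rw [hF3]
      exact (hf.comp prj_contMDiff1).mul (hΨks.comp
        ((hf.comp hp2).mul (hΨks.comp (hf.comp prj_contMDiff3))))
    have hrange : Set.range F3 ⊆ Rset U F (⇑ψ) (k + (k + k)) := by
      rintro _ ⟨y, rfl⟩
      rw [hF3]
      exact Rset_mul_mem U F ψ k (k + k) _ _ (hfR (Set.mem_range_self _))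
        (Rset_mul_mem U F ψ k k _ _ (hfR (Set.mem_range_self _)) (hfR (Set.mem_range_self _)))
    have hmax3 : Module.finrank ℝ
        (Submodule.span ℝ (Set.range fun y => Theta I F3 0 y)) ≤ Module.finrank ℝ W :=
      hmax (k + (k + k)) (d + d + d) F3 hs hrange
    have g1 : ∀ v, Theta I F3 0 (blk1 d v) = Theta I f 0 v := by
      intro v
      calc Theta I F3 0 (blk1 d v)
          = Theta I F3 ((0 : Fin (d+d+d) → ℝ) + blk1 d 0) (blk1 d v) := by
            rw [map_zero, add_zero]
        _ = Theta I (fun y => F3 (0 + blk1 d y)) 0 v :=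
            (theta_affine I hs 0 (blk1 d) 0 v).symm
        _ = Theta I (fun y => 1 * f y * ((⇑ψ)^[k] (f (z + 0) * (⇑ψ)^[k] (f 0)))) 0 v := by
            rw [show (fun y => F3 (0 + blk1 d y))
                = (fun y => 1 * f y * ((⇑ψ)^[k] (f (z + 0) * (⇑ψ)^[k] (f 0)))) from by
              funext y
              rw [hF3]
              simp only [zero_add, prj1_blk1, prj2_blk1, prj3_blk1, one_mul]]
        _ = AdL I 1 (Theta I f 0 v) :=
            theta_conj I hf 1 ((⇑ψ)^[k] (f (z + 0) * (⇑ψ)^[k] (f 0))) 0 v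
        _ = Theta I f 0 v := by rw [AdL_one]; rfl
    have g2 : ∀ v, Theta I F3 0 (blk2 d v)
        = AdL I (f 0) (D1 I ((⇑ψ)^[k]) (Theta I f z v)) := by
      intro v
      calc Theta I F3 0 (blk2 d v)
          = Theta I F3 ((0 : Fin (d+d+d) → ℝ) + blk2 d 0) (blk2 d v) := by
            rw [map_zero, add_zero]
        _ = Theta I (fun y => F3 (0 + blk2 d y)) 0 v :=
            (theta_affine I hs 0 (blk2 d) 0 v).symm
        _ = Theta I (fun y => f 0 * (⇑ψ)^[k] (f (z + y)) * ((⇑ψ)^[k] ((⇑ψ)^[k] (f 0)))) 0 v := by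
            rw [show (fun y => F3 (0 + blk2 d y))
                = (fun y => f 0 * (⇑ψ)^[k] (f (z + y)) * ((⇑ψ)^[k] ((⇑ψ)^[k] (f 0)))) from by
              funext y
              rw [hF3]
              simp only [zero_add, prj1_blk2, prj2_blk2, prj3_blk2]
              rw [hΨkhom, mul_assoc]]
        _ = AdL I (f 0) (Theta I (fun y => (⇑ψ)^[k] (f (z + y))) 0 v) :=
            theta_conj I (hΨks.comp (hf.comp htr)) (f 0) ((⇑ψ)^[k] ((⇑ψ)^[k] (f 0))) 0 v
        _ = AdL I (f 0) (D1 I ((⇑ψ)^[k]) (Theta I (fun y => f (z + y)) 0 v)) :=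
            congrArg _ (theta_hom I (hf.comp htr) hΨks hΨkhom 0 v)
        _ = AdL I (f 0) (D1 I ((⇑ψ)^[k]) (Theta I f z v)) := by
            rw [theta_translate I hf z 0 v, add_zero]
    have g3 : ∀ v, Theta I F3 0 (blk3 d v)
        = AdL I (f 0 * (⇑ψ)^[k] (f z))
            (D1 I ((⇑ψ)^[k]) (D1 I ((⇑ψ)^[k]) (Theta I f 0 v))) := by
      intro v
      calc Theta I F3 0 (blk3 d v)
          = Theta I F3 ((0 : Fin (d+d+d) → ℝ) + blk3 d 0) (blk3 d v) := by
            rw [map_zero, add_zero]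
        _ = Theta I (fun y => F3 (0 + blk3 d y)) 0 v :=
            (theta_affine I hs 0 (blk3 d) 0 v).symm
        _ = Theta I (fun y => (f 0 * (⇑ψ)^[k] (f z)) * ((⇑ψ)^[k] ((⇑ψ)^[k] (f y))) * 1) 0 v := by
            rw [show (fun y => F3 (0 + blk3 d y))
                = (fun y => (f 0 * (⇑ψ)^[k] (f z)) * ((⇑ψ)^[k] ((⇑ψ)^[k] (f y))) * 1) from by
              funext y
              rw [hF3]
              simp only [zero_add, prj1_blk3, prj2_blk3, prj3_blk3, add_zero, mul_one]
              rw [hΨkhom, mul_assoc]]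
        _ = AdL I (f 0 * (⇑ψ)^[k] (f z))
              (Theta I (fun y => (⇑ψ)^[k] ((⇑ψ)^[k] (f y))) 0 v) :=
            theta_conj I (hΨks.comp (hΨks.comp hf)) (f 0 * (⇑ψ)^[k] (f z)) 1 0 v
        _ = AdL I (f 0 * (⇑ψ)^[k] (f z))
              (D1 I ((⇑ψ)^[k]) (Theta I (fun y => (⇑ψ)^[k] (f y)) 0 v)) :=
            congrArg _ (theta_hom I (hΨks.comp hf) hΨks hΨkhom 0 v)
        _ = AdL I (f 0 * (⇑ψ)^[k] (f z))
              (D1 I ((⇑ψ)^[k]) (D1 I ((⇑ψ)^[k]) (Theta I f 0 v))) := by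
            rw [theta_hom I hf hΨks hΨkhom 0 v]
    have hWle : W ≤ Submodule.span ℝ (Set.range fun y => Theta I F3 0 y) := by
      rw [hWspan]
      apply Submodule.span_le.mpr
      rintro _ ⟨v, rfl⟩
      exact Submodule.subset_span ⟨blk1 d v, g1 v⟩
    have hW3 : Submodule.span ℝ (Set.range fun y => Theta I F3 0 y) = W :=
      (Submodule.eq_of_le_of_finrank_le hWle hmax3).symm
    constructor
    · intro v
      rw [← g2 v, ← hW3]
      exact Submodule.subset_span ⟨blk2 d v, rfl⟩
    · intro v
      rw [← g3 v, ← hW3]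
      exact Submodule.subset_span ⟨blk3 d v, rfl⟩
  -- basic inverse identities
  have hD1inv1 : ∀ u : E, D1 I ((⇑ψ)^[k]) (D1 I ((⇑ψ.symm)^[k]) u) = u := fun u =>
    D1_comp_apply I hΨks' hΨks (iterate_iterate_symm ψ k) (myIterate_map_one ψ.symm k) u
  have hD1inv2 : ∀ u : E, D1 I ((⇑ψ.symm)^[k]) (D1 I ((⇑ψ)^[k]) u) = u := fun u =>
    D1_comp_apply I hΨks hΨks' (iterate_symm_iterate ψ k) (myIterate_map_one ψ k) u
  have hAd1 : ∀ (g : G) (u : E), AdL I g (AdL I g⁻¹ u) = u := fun g u =>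
    ContinuousLinearMap.ext_iff.mp (AdL_comp_inv I g) u
  have hAd2 : ∀ (g : G) (u : E), AdL I g⁻¹ (AdL I g u) = u := fun g u =>
    ContinuousLinearMap.ext_iff.mp (AdL_inv_comp I g) u
  set B : E →L[ℝ] E := (AdL I (f 0)).comp (D1 I ((⇑ψ)^[k])) with hB
  have hBmem : ∀ u ∈ W, B u ∈ W := by
    apply span_stable hWspan B
    rintro _ ⟨v, rfl⟩
    rw [hB]
    exact (gen 0).1 v
  have hBinvL : ∀ x : E, D1 I ((⇑ψ.symm)^[k]) (AdL I ((f 0)⁻¹) (B x)) = x := fun x => by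
    rw [hB]
    show D1 I ((⇑ψ.symm)^[k]) (AdL I ((f 0)⁻¹) (AdL I (f 0) (D1 I ((⇑ψ)^[k]) x))) = x
    rw [hAd2]
    exact hD1inv2 x
  have hBinj : ∀ a b : E, B a = B b → a = b := fun a b hab => by
    rw [← hBinvL a, ← hBinvL b, hab]
  have hmapB : Submodule.map ((B : E →L[ℝ] E) : E →ₗ[ℝ] E) W = W := by
    have hle : Submodule.map ((B : E →L[ℝ] E) : E →ₗ[ℝ] E) W ≤ W := by
      rintro _ ⟨u, hu, rfl⟩
      exact hBmem u hu
    have h1 : ((B : E →L[ℝ] E) : E →ₗ[ℝ] E) ∘ₗ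
        (((D1 I ((⇑ψ.symm)^[k])).comp (AdL I ((f 0)⁻¹)) : E →L[ℝ] E) : E →ₗ[ℝ] E)
        = LinearMap.id := LinearMap.ext fun u => by
      show B (D1 I ((⇑ψ.symm)^[k]) (AdL I ((f 0)⁻¹) u)) = u
      rw [hB]
      show AdL I (f 0) (D1 I ((⇑ψ)^[k]) (D1 I ((⇑ψ.symm)^[k]) (AdL I ((f 0)⁻¹) u))) = u
      rw [hD1inv1]
      exact hAd1 (f 0) u
    have h2 : (((D1 I ((⇑ψ.symm)^[k])).comp (AdL I ((f 0)⁻¹)) : E →L[ℝ] E) : E →ₗ[ℝ] E) ∘ₗ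
        ((B : E →L[ℝ] E) : E →ₗ[ℝ] E) = LinearMap.id := LinearMap.ext fun u => by
      show D1 I ((⇑ψ.symm)^[k]) (AdL I ((f 0)⁻¹) (B u)) = u
      exact hBinvL u
    have hfr : Module.finrank ℝ
        (Submodule.map ((B : E →L[ℝ] E) : E →ₗ[ℝ] E) W) = Module.finrank ℝ W :=
      LinearEquiv.finrank_map_eq (LinearEquiv.ofLinear _ _ h1 h2) W
    exact Submodule.eq_of_le_of_finrank_le hle hfr.symm.le
  -- invariance of W under Ad(f z · (f 0)⁻¹)
  have hInv : ∀ (z : Fin d → ℝ), ∀ X ∈ W, AdL I (f z * (f 0)⁻¹) X ∈ W := by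
    intro z X hX
    have hXm : X ∈ Submodule.map ((B : E →L[ℝ] E) : E →ₗ[ℝ] E) W := by
      rw [hmapB]; exact hX
    obtain ⟨u, hu, hBu⟩ := hXm
    have hstab : ∀ s ∈ W, B (AdL I (f z) (D1 I ((⇑ψ)^[k]) s)) ∈ W := by
      apply span_stable hWspan (B.comp ((AdL I (f z)).comp (D1 I ((⇑ψ)^[k]))))
      rintro _ ⟨v, rfl⟩
      have h3 := (gen z).2 v
      have hcomm := ContinuousLinearMap.ext_iff.mp
        (adL_hom_comm I hΨks hΨkhom (f z)) (D1 I ((⇑ψ)^[k]) (Theta I f 0 v))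
      have key : AdL I (f 0 * (⇑ψ)^[k] (f z))
          (D1 I ((⇑ψ)^[k]) (D1 I ((⇑ψ)^[k]) (Theta I f 0 v)))
          = B (AdL I (f z) (D1 I ((⇑ψ)^[k]) (Theta I f 0 v))) := by
        rw [AdL_mul, hB]
        show AdL I (f 0) (AdL I ((⇑ψ)^[k] (f z))
          (D1 I ((⇑ψ)^[k]) (D1 I ((⇑ψ)^[k]) (Theta I f 0 v)))) = _
        rw [show AdL I ((⇑ψ)^[k] (f z)) (D1 I ((⇑ψ)^[k]) (D1 I ((⇑ψ)^[k]) (Theta I f 0 v)))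
            = D1 I ((⇑ψ)^[k]) (AdL I (f z) (D1 I ((⇑ψ)^[k]) (Theta I f 0 v))) from hcomm]
        rfl
      show B (AdL I (f z) (D1 I ((⇑ψ)^[k]) (Theta I f 0 v))) ∈ W
      rw [← key]
      exact h3
    have hBt := hstab u hu
    have hBtm : B (AdL I (f z) (D1 I ((⇑ψ)^[k]) u))
        ∈ Submodule.map ((B : E →L[ℝ] E) : E →ₗ[ℝ] E) W := by
      rw [hmapB]; exact hBt
    obtain ⟨w, hw, hww⟩ := hBtm
    have hinj : w = AdL I (f z) (D1 I ((⇑ψ)^[k]) u) := hBinj _ _ hww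
    have hres : AdL I (f z) (D1 I ((⇑ψ)^[k]) u) ∈ W := hinj ▸ hw
    have hXeq : AdL I (f z * (f 0)⁻¹) X = AdL I (f z) (D1 I ((⇑ψ)^[k]) u) := by
      rw [AdL_mul]
      show AdL I (f z) (AdL I ((f 0)⁻¹) X) = _
      congr 1
      rw [← hBu]
      show AdL I ((f 0)⁻¹) (B u) = D1 I ((⇑ψ)^[k]) u
      rw [hB]
      show AdL I ((f 0)⁻¹) (AdL I (f 0) (D1 I ((⇑ψ)^[k]) u)) = D1 I ((⇑ψ)^[k]) u
      exact hAd2 (f 0) _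
    rw [hXeq]
    exact hres
  -- curves realizing every Y ∈ W, with Ad(c t)-invariance
  have hcurve : ∀ Y ∈ W, ∃ c : ℝ → G, ContMDiff 𝓘(ℝ, ℝ) I ∞ c ∧ c 0 = 1 ∧
      mfderiv 𝓘(ℝ, ℝ) I c 0 (1 : ℝ) = Y ∧ ∀ (t : ℝ), ∀ X ∈ W, AdL I (c t) X ∈ W := by
    intro Y hY
    rw [hWspan] at hY
    induction hY using Submodule.span_induction with
    | mem x hx =>
        obtain ⟨y, rfl⟩ := hx
        refine ⟨fun t : ℝ => f (t • y) * (f 0)⁻¹,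
          (hf.comp ((ContinuousLinearMap.id ℝ ℝ).smulRight y).contMDiff).mul contMDiff_const,
          by simp, mfderiv_gen_curve I hf y, fun t X hX => hInv (t • y) X hX⟩
    | zero =>
        refine ⟨fun _ => 1, contMDiff_const, rfl, ?_, ?_⟩
        · rw [mfderiv_const]; rfl
        · intro t X hX
          have hid : AdL I (1 : G) X = X := by rw [AdL_one]; rfl
          rwa [hid]
    | add x y hx hy ihx ihy =>
        obtain ⟨c₁, hc₁, e₁, d₁, w₁⟩ := ihx
        obtain ⟨c₂, hc₂, e₂, d₂, w₂⟩ := ihy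
        refine ⟨fun t => c₁ t * c₂ t, hc₁.mul hc₂, by show c₁ 0 * c₂ 0 = 1; rw [e₁, e₂, one_mul],
          mfderiv_curve_mul I hc₁ hc₂ e₁ e₂ x y d₁ d₂, ?_⟩
        intro t X hX
        have hsplit : AdL I (c₁ t * c₂ t) X = AdL I (c₁ t) (AdL I (c₂ t) X) := by
          rw [AdL_mul]; rfl
        rw [hsplit]
        exact w₁ t _ (w₂ t X hX)
    | smul a x hx ihx =>
        obtain ⟨c, hc, e, dd, w⟩ := ihx
        refine ⟨fun t => c (a * t),
          hc.comp (contMDiff_iff_contDiff.mpr (contDiff_const.mul contDiff_id)),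
          by show c (a * 0) = 1; rw [mul_zero, e], mfderiv_curve_rescale I hc a x dd,
          fun t X hX => w (a * t) X hX⟩
  -- conclusion via the defining property of the bracket
  intro X hX Y hY
  obtain ⟨c, hc, hc0, hcd, hcW⟩ := hcurve Y hY
  have hd := hlb Y X c hc hc0 hcd
  replace hd := hasDerivAt_iff_tendsto_slope.mp hd
  have hW_closed : IsClosed (W : Set E) := Submodule.closed_of_finiteDimensional W
  refine hW_closed.mem_of_tendsto hd (Filter.Eventually.of_forall fun t => ?_)
  erw [slope_def_module]
  refine W.smul_mem _ (W.sub_mem ?_ ?_)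
  · exact hcW t X hX
  · exact hcW 0 X hX
end

section
/- (Ad-rank condition) If the smallest 𝛙-invariant subspace of 𝔤 containing the image of d̂F_0 equals 𝔤 (equivalently the Kalman-type matrix (𝛙^{n-1}d̂F_0, …, 𝛙 d̂F_0, d̂F_0) has full rank n = dim 𝔤), then e ∈ int(R_n); in particular the system is locally controllable at e. -/
open Manifold Pointwise

noncomputable section AdRankAux

open Filter Set

/-- Ordered product `F(x 0) · ψ(F(x 1)) · ψ²(F(x 2)) ⋯` written recursively. -/
def prodAux {α G : Type*} [Group G] (F : α → G) (ψ : G → G) : ∀ k, (Fin k → α) → G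
  | 0, _ => 1
  | k + 1, x => F (x 0) * ψ (prodAux F ψ k fun i => x i.succ)

/-- The "tail" continuous linear map. -/
def tailL (V : Type*) [NormedAddCommGroup V] [NormedSpace ℝ V] (k : ℕ) :
    (Fin (k + 1) → V) →L[ℝ] (Fin k → V) :=
  ContinuousLinearMap.pi fun i : Fin k => ContinuousLinearMap.proj i.succ

@[simp] lemma tailL_apply {V : Type*} [NormedAddCommGroup V] [NormedSpace ℝ V] (k : ℕ)
    (x : Fin (k + 1) → V) (i : Fin k) : tailL V k x i = x i.succ := rfl

/-- The Kalman-type candidate derivative of `prodAux` at `0`. -/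
def Dk {m : ℕ} {E : Type*} [NormedAddCommGroup E] [NormedSpace ℝ E]
    (B : (Fin m → ℝ) →L[ℝ] E) (A : E →L[ℝ] E) : ∀ k, (Fin k → (Fin m → ℝ)) →L[ℝ] E
  | 0 => 0
  | k + 1 => B.comp (ContinuousLinearMap.proj 0) +
      (A.comp (Dk B A k)).comp (tailL (Fin m → ℝ) k)

lemma Dk_succ_apply {m : ℕ} {E : Type*} [NormedAddCommGroup E] [NormedSpace ℝ E]
    (B : (Fin m → ℝ) →L[ℝ] E) (A : E →L[ℝ] E) (k : ℕ) (x : Fin (k + 1) → Fin m → ℝ) :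
    Dk B A (k + 1) x = B (x 0) + A (Dk B A k (tailL (Fin m → ℝ) k x)) := rfl

lemma prodAux_zero {α G : Type*} [Zero α] [Group G] {F : α → G} {ψ : G → G}
    (hF0 : F 0 = 1) (hψ1 : ψ 1 = 1) : ∀ k, prodAux F ψ k (0 : Fin k → α) = 1
  | 0 => rfl
  | k + 1 => by
    show F 0 * ψ (prodAux F ψ k 0) = 1
    rw [prodAux_zero hF0 hψ1 k, hF0, hψ1, one_mul]

lemma prodAux_mem_Rset {α G : Type*} [Group G] {U : Set α} {F : α → G} {ψ : G → G} :
    ∀ k (x : Fin k → α), (∀ i, x i ∈ U) → prodAux F ψ k x ∈ Rset U F ψ k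
  | 0, _, _ => rfl
  | k + 1, x, hx =>
    Set.mul_mem_mul (Set.mem_image_of_mem F (hx 0))
      (Set.mem_image_of_mem ψ (prodAux_mem_Rset k _ fun i => hx i.succ))

section Manifold

variable {m : ℕ}
  {E : Type*} [NormedAddCommGroup E] [NormedSpace ℝ E]
  {H : Type*} [TopologicalSpace H] {I : ModelWithCorners ℝ E H}
  {G : Type*} [TopologicalSpace G] [ChartedSpace H G] [Group G] [LieGroup I (⊤ : ℕ∞) G]

/-- Product rule companion: `HasMFDerivAt` for pairs. -/
theorem HasMFDerivAt.prodMk' {M : Type*} [TopologicalSpace M] [ChartedSpace H M]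
    {M' : Type*} {H' : Type*} [TopologicalSpace H'] {E' : Type*} [NormedAddCommGroup E']
    [NormedSpace ℝ E'] {I' : ModelWithCorners ℝ E' H'} [TopologicalSpace M']
    [ChartedSpace H' M']
    {M'' : Type*} {H'' : Type*} [TopologicalSpace H''] {E'' : Type*} [NormedAddCommGroup E'']
    [NormedSpace ℝ E''] {I'' : ModelWithCorners ℝ E'' H''} [TopologicalSpace M'']
    [ChartedSpace H'' M'']
    {f : M → M'} {g : M → M''} {x : M}
    {f' : TangentSpace I x →L[ℝ] TangentSpace I' (f x)}
    {g' : TangentSpace I x →L[ℝ] TangentSpace I'' (g x)}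
    (hf : HasMFDerivAt I I' f x f') (hg : HasMFDerivAt I I'' g x g') :
    HasMFDerivAt I (I'.prod I'') (fun y => (f y, g y)) x (f'.prod g') :=
  (hf.mdifferentiableAt.prodMk hg.mdifferentiableAt).hasMFDerivAt.congr_mfderiv
    (by rw [hf.mdifferentiableAt.mfderiv_prod hg.mdifferentiableAt, hf.mfderiv, hg.mfderiv]; rfl)

/-- The differential of multiplication at `(1,1)` is addition. -/
theorem mfderiv_mul_one_one (X Y : E) :
    mfderiv (I.prod I) I (fun p : G × G => p.1 * p.2) ((1 : G), (1 : G)) (X, Y) = X + Y := by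
  have hmul : HasMFDerivAt (I.prod I) I (fun p : G × G => p.1 * p.2) ((1 : G), (1 : G))
      (mfderiv (I.prod I) I (fun p : G × G => p.1 * p.2) ((1 : G), (1 : G))) :=
    ((contMDiff_mul I (⊤ : ℕ∞) (G := G)).contMDiffAt.mdifferentiableAt (by simp)).hasMFDerivAt
  set Dm := mfderiv (I.prod I) I (fun p : G × G => p.1 * p.2) ((1 : G), (1 : G)) with hDm
  have hinl : HasMFDerivAt I (I.prod I) (fun y : G => (y, (1 : G))) 1
      ((ContinuousLinearMap.id ℝ (TangentSpace I (1 : G))).prod 0) :=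
    (hasMFDerivAt_id (I := I) (1 : G)).prodMk' (hasMFDerivAt_const (I := I) (I' := I) (1 : G) (1 : G))
  have hinr : HasMFDerivAt I (I.prod I) (fun y : G => ((1 : G), y)) 1
      ((0 : TangentSpace I (1 : G) →L[ℝ] TangentSpace I (1 : G)).prod
        (ContinuousLinearMap.id ℝ (TangentSpace I (1 : G)))) :=
    (hasMFDerivAt_const (I := I) (I' := I) (1 : G) (1 : G)).prodMk' (hasMFDerivAt_id (I := I) (1 : G))
  have h1 : HasMFDerivAt I I (@id G) 1
      (Dm.comp ((ContinuousLinearMap.id ℝ (TangentSpace I (1 : G))).prod 0)) :=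
    (HasMFDerivAt.comp (f := fun y : G => (y, (1 : G))) (x := (1 : G)) (hf := hinl) (hg := hmul)).congr_of_eventuallyEq
      (Filter.Eventually.of_forall fun y => (mul_one y).symm)
  have h2 : HasMFDerivAt I I (@id G) 1
      (Dm.comp ((0 : TangentSpace I (1 : G) →L[ℝ] TangentSpace I (1 : G)).prod
        (ContinuousLinearMap.id ℝ (TangentSpace I (1 : G))))) :=
    (HasMFDerivAt.comp (f := fun y : G => ((1 : G), y)) (x := (1 : G)) (hf := hinr) (hg := hmul)).congr_of_eventuallyEq
      (Filter.Eventually.of_forall fun y => (one_mul y).symm)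
  have e1 := h1.mfderiv
  have e2 := h2.mfderiv
  rw [mfderiv_id] at e1 e2
  have hX : Dm (X, (0 : E)) = X := by
    have := congrArg (fun L : TangentSpace I (1 : G) →L[ℝ] TangentSpace I (1 : G) => L X) e1.symm
    exact this
  have hY : Dm ((0 : E), Y) = Y := by
    have := congrArg (fun L : TangentSpace I (1 : G) →L[ℝ] TangentSpace I (1 : G) => L Y) e2.symm
    exact this
  have : (X, Y) = ((X, (0 : E)) : E × E) + (((0 : E), Y) : E × E) := by simp
  rw [this]
  exact (Dm.map_add (X, (0 : E)) ((0 : E), Y)).trans (congrArg₂ (· + ·) hX hY)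

theorem prodAux_hasMFDerivAt {ψ : G → G} (hψ1 : ψ 1 = 1) {F : (Fin m → ℝ) → G}
    (hF0 : F 0 = 1) {A : E →L[ℝ] E} (hA : HasMFDerivAt I I ψ 1 A)
    {B : (Fin m → ℝ) →L[ℝ] E} (hB : HasMFDerivAt 𝓘(ℝ, Fin m → ℝ) I F 0 B) :
    ∀ k, HasMFDerivAt 𝓘(ℝ, Fin k → (Fin m → ℝ)) I (prodAux F ψ k) 0 (Dk B A k)
  | 0 => hasMFDerivAt_const (1 : G) (0 : Fin 0 → Fin m → ℝ)
  | k + 1 => by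
    have IH := prodAux_hasMFDerivAt hψ1 hF0 hA hB k
    -- first factor
    have hproj : HasMFDerivAt 𝓘(ℝ, Fin (k+1) → Fin m → ℝ) 𝓘(ℝ, Fin m → ℝ)
        (fun x : Fin (k+1) → Fin m → ℝ => x 0) 0
        (ContinuousLinearMap.proj (R := ℝ) (φ := fun _ : Fin (k+1) => Fin m → ℝ) 0) :=
      (ContinuousLinearMap.proj (R := ℝ) (φ := fun _ : Fin (k+1) => Fin m → ℝ)
        0).hasFDerivAt.hasMFDerivAt
    have hFx : HasMFDerivAt 𝓘(ℝ, Fin (k+1) → Fin m → ℝ) I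
        (fun x : Fin (k+1) → Fin m → ℝ => F (x 0)) 0
        (B.comp (ContinuousLinearMap.proj 0)) := hB.comp 0 hproj
    -- second factor
    have htail : HasMFDerivAt 𝓘(ℝ, Fin (k+1) → Fin m → ℝ) 𝓘(ℝ, Fin k → Fin m → ℝ)
        (tailL (Fin m → ℝ) k) 0 (tailL (Fin m → ℝ) k) :=
      (tailL (Fin m → ℝ) k).hasFDerivAt.hasMFDerivAt
    have hPk : HasMFDerivAt 𝓘(ℝ, Fin (k+1) → Fin m → ℝ) I
        (fun x : Fin (k+1) → Fin m → ℝ => prodAux F ψ k (tailL (Fin m → ℝ) k x)) 0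
        ((Dk B A k).comp (tailL (Fin m → ℝ) k)) := IH.comp 0 htail
    have hA' : HasMFDerivAt I I ψ
        (prodAux F ψ k (tailL (Fin m → ℝ) k (0 : Fin (k+1) → Fin m → ℝ))) A := by
      rw [show tailL (Fin m → ℝ) k (0 : Fin (k+1) → Fin m → ℝ) = 0 from map_zero _,
        prodAux_zero hF0 hψ1 k]
      exact hA
    have hψP : HasMFDerivAt 𝓘(ℝ, Fin (k+1) → Fin m → ℝ) I
        (fun x : Fin (k+1) → Fin m → ℝ => ψ (prodAux F ψ k (tailL (Fin m → ℝ) k x))) 0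
        (A.comp ((Dk B A k).comp (tailL (Fin m → ℝ) k))) := hA'.comp 0 hPk
    -- pair
    have hpair := hFx.prodMk' hψP
    -- multiplication
    have hmul : HasMFDerivAt (I.prod I) I (fun p : G × G => p.1 * p.2)
        (F ((0 : Fin (k+1) → Fin m → ℝ) 0),
          ψ (prodAux F ψ k (tailL (Fin m → ℝ) k (0 : Fin (k+1) → Fin m → ℝ))))
        (mfderiv (I.prod I) I (fun p : G × G => p.1 * p.2) ((1 : G), (1 : G))) := by
      rw [show tailL (Fin m → ℝ) k (0 : Fin (k+1) → Fin m → ℝ) = 0 from map_zero _,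
        prodAux_zero hF0 hψ1 k, show ((0 : Fin (k+1) → Fin m → ℝ) 0) = 0 from rfl, hF0, hψ1]
      exact ((contMDiff_mul I (⊤ : ℕ∞) (G := G)).contMDiffAt.mdifferentiableAt (by simp)).hasMFDerivAt
    have hcomp := hmul.comp 0 hpair
    have hEq : (mfderiv (I.prod I) I (fun p : G × G => p.1 * p.2) ((1 : G), (1 : G))).comp
        ((B.comp (ContinuousLinearMap.proj 0)).prod
          (A.comp ((Dk B A k).comp (tailL (Fin m → ℝ) k)))) = Dk B A (k + 1) := by
      apply ContinuousLinearMap.ext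
      intro x
      show mfderiv (I.prod I) I (fun p : G × G => p.1 * p.2) ((1 : G), (1 : G))
          (B (x 0), A (Dk B A k (tailL (Fin m → ℝ) k x)))
          = B (x 0) + A (Dk B A k (tailL (Fin m → ℝ) k x))
      exact mfderiv_mul_one_one _ _
    exact (hcomp.congr_mfderiv hEq)

theorem prodAux_contMDiffAt {ψ : G → G} (hψ : ContMDiff I I (⊤ : ℕ∞) ψ) {F : (Fin m → ℝ) → G}
    (hFc : ContMDiffAt 𝓘(ℝ, Fin m → ℝ) I (⊤ : ℕ∞) F 0) :
    ∀ k, ContMDiffAt 𝓘(ℝ, Fin k → (Fin m → ℝ)) I (⊤ : ℕ∞) (prodAux F ψ k) 0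
  | 0 => contMDiffAt_const
  | k + 1 => by
    have IH := prodAux_contMDiffAt hψ hFc k
    have hproj : ContMDiffAt 𝓘(ℝ, Fin (k+1) → Fin m → ℝ) 𝓘(ℝ, Fin m → ℝ) (⊤ : ℕ∞)
        (fun x : Fin (k+1) → Fin m → ℝ => x 0) 0 :=
      contMDiffAt_iff_contDiffAt.mpr
        ((ContinuousLinearMap.proj (R := ℝ) (φ := fun _ : Fin (k+1) => Fin m → ℝ)
          0).contDiff.contDiffAt)
    have htail : ContMDiffAt 𝓘(ℝ, Fin (k+1) → Fin m → ℝ) 𝓘(ℝ, Fin k → Fin m → ℝ) (⊤ : ℕ∞)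
        (tailL (Fin m → ℝ) k) 0 :=
      contMDiffAt_iff_contDiffAt.mpr ((tailL (Fin m → ℝ) k).contDiff.contDiffAt)
    have h1 : ContMDiffAt 𝓘(ℝ, Fin (k+1) → Fin m → ℝ) I (⊤ : ℕ∞)
        (fun x : Fin (k+1) → Fin m → ℝ => F (x 0)) 0 := hFc.comp 0 hproj
    have h2 : ContMDiffAt 𝓘(ℝ, Fin (k+1) → Fin m → ℝ) I (⊤ : ℕ∞)
        (fun x : Fin (k+1) → Fin m → ℝ => ψ (prodAux F ψ k (tailL (Fin m → ℝ) k x))) 0 :=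
      hψ.contMDiffAt.comp 0 (IH.comp 0 htail)
    exact h1.mul h2

end Manifold

/-- The purely linear-algebraic Kalman rank argument. -/
theorem kalman_rank {m : ℕ} {E : Type*} [NormedAddCommGroup E] [NormedSpace ℝ E]
    [FiniteDimensional ℝ E] (B : (Fin m → ℝ) →L[ℝ] E) (A : E →L[ℝ] E)
    (hrank : ∀ V : Submodule ℝ E, (∀ y, B y ∈ V) → (∀ X ∈ V, A X ∈ V) → V = ⊤) :
    LinearMap.range (Dk B A (Module.finrank ℝ E) : (Fin (Module.finrank ℝ E) → Fin m → ℝ) →ₗ[ℝ] E) = ⊤ := by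
  set n := Module.finrank ℝ E with hn
  set V : ℕ → Submodule ℝ E := fun k => LinearMap.range (Dk B A k : (Fin k → Fin m → ℝ) →ₗ[ℝ] E) with hV
  have hVsucc : ∀ k, V (k + 1) = LinearMap.range (B : (Fin m → ℝ) →ₗ[ℝ] E) ⊔ (V k).map (A : E →ₗ[ℝ] E) := by
    intro k
    apply le_antisymm
    · rintro z ⟨x, rfl⟩
      simp only [ContinuousLinearMap.coe_coe]
      rw [Dk_succ_apply]
      exact Submodule.add_mem _ (Submodule.mem_sup_left (LinearMap.mem_range_self _ _))
        (Submodule.mem_sup_right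
          (Submodule.mem_map_of_mem (LinearMap.mem_range_self _ _)))
    · apply sup_le
      · rintro z ⟨y, rfl⟩
        refine ⟨Fin.cons y 0, ?_⟩
        have ht : tailL (Fin m → ℝ) k (Fin.cons y 0) = 0 := by
          funext i; simp [Fin.cons_succ]
        simp only [ContinuousLinearMap.coe_coe]
        rw [Dk_succ_apply, ht, map_zero, map_zero, add_zero, Fin.cons_zero]
      · rintro z ⟨-, ⟨x, rfl⟩, rfl⟩
        refine ⟨Fin.cons 0 x, ?_⟩
        have ht : tailL (Fin m → ℝ) k (Fin.cons 0 x) = x := by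
          funext i; simp [Fin.cons_succ]
        simp only [ContinuousLinearMap.coe_coe]
        rw [Dk_succ_apply, ht, Fin.cons_zero, map_zero, zero_add]
  have hmono : Monotone V := by
    apply monotone_nat_of_le_succ
    intro k
    induction k with
    | zero =>
      rintro z ⟨x, rfl⟩
      have : Dk B A 0 x = 0 := rfl
      rw [ContinuousLinearMap.coe_coe, this]; exact Submodule.zero_mem _
    | succ k IH =>
      rw [hVsucc k, hVsucc (k + 1)]
      exact sup_le_sup le_rfl (Submodule.map_mono IH)
  have hstab : ∀ k, V (k + 1) ≤ V k → V k = ⊤ := by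
    intro k hk
    have heq : V (k + 1) = V k :=
      le_antisymm hk (hmono (Nat.le_succ k))
    apply hrank (V k)
    · intro y
      have : B y ∈ V (k + 1) := by
        rw [hVsucc]; exact Submodule.mem_sup_left (LinearMap.mem_range_self _ _)
      rwa [heq] at this
    · intro X hX
      have : A X ∈ V (k + 1) := by
        rw [hVsucc]; exact Submodule.mem_sup_right (Submodule.mem_map_of_mem hX)
      rwa [heq] at this
  by_cases hc : ∃ k < n, V (k + 1) ≤ V k
  · obtain ⟨k, hkn, hk⟩ := hc
    have htop := hstab k hk
    exact eq_top_iff.mpr (htop ▸ hmono hkn.le)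
  · push_neg at hc
    have hlt : ∀ k < n, V k < V (k + 1) := fun k hk =>
      lt_of_le_not_ge (hmono (Nat.le_succ k)) (hc k hk)
    have hfr : ∀ k ≤ n, k ≤ Module.finrank ℝ (V k) := by
      intro k
      induction k with
      | zero => intro _; exact Nat.zero_le _
      | succ k IH =>
        intro hk1
        have h1 := IH (Nat.le_of_succ_le hk1)
        have h2 := Submodule.finrank_lt_finrank_of_lt (hlt k (Nat.lt_of_succ_le hk1))
        omega
    have h1 := hfr n le_rfl
    have h2 : Module.finrank ℝ (V n) ≤ n := hn ▸ Submodule.finrank_le (V n)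
    exact Submodule.eq_top_of_finrank_eq (le_antisymm h2 h1)

end AdRankAux

/-- **Ad-rank condition.** For the discrete-time linear system
`g_{k+1} = F(u_k)·ψ(g_k)` on a connected Lie group `G`: if the smallest `dψ_e`-invariant
subspace of `𝔤 ≅ E` containing the image of `d̂F_0` equals `𝔤` (the Kalman rank
condition), then `e ∈ int(R_n)` with `n = dim 𝔤`; in particular the system is locally
controllable at the identity. -/
theorem ad_rank_condition {m : ℕ}
    {E : Type*} [NormedAddCommGroup E] [NormedSpace ℝ E] [FiniteDimensional ℝ E]
    {H : Type*} [TopologicalSpace H] (I : ModelWithCorners ℝ E H)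
    {G : Type*} [TopologicalSpace G] [ChartedSpace H G] [Group G] [LieGroup I (⊤ : ℕ∞) G]
    [ConnectedSpace G]
    (ψ : G ≃* G) (hψ : ContMDiff I I (⊤ : ℕ∞) ψ) (hψ' : ContMDiff I I (⊤ : ℕ∞) ψ.symm)
    (U : Set (Fin m → ℝ)) (hU : U ∈ nhds (0 : Fin m → ℝ))
    (F : (Fin m → ℝ) → G) (hF : ContMDiffOn 𝓘(ℝ, Fin m → ℝ) I (⊤ : ℕ∞) F U)
    (hF0 : F 0 = 1)
    (hrank : ∀ V : Submodule ℝ E,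
      (∀ y : Fin m → ℝ,
        mfderiv I I (fun h => h * (F 0)⁻¹) (F 0)
            (mfderiv 𝓘(ℝ, Fin m → ℝ) I F 0 y) ∈ V) →
      (∀ X ∈ V, mfderiv I I ψ (1 : G) X ∈ V) →
      V = ⊤) :
    (1 : G) ∈ interior (Rset U F (⇑ψ) (Module.finrank ℝ E)) := by
  classical
  set n := Module.finrank ℝ E with hn
  have hψ1 : (⇑ψ) 1 = 1 := map_one ψ
  -- The derivative data
  set B : (Fin m → ℝ) →L[ℝ] E := mfderiv 𝓘(ℝ, Fin m → ℝ) I F 0 with hBdef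
  set A : E →L[ℝ] E := mfderiv I I (⇑ψ) 1 with hAdef
  have hFc : ContMDiffAt 𝓘(ℝ, Fin m → ℝ) I (⊤ : ℕ∞) F 0 := hF.contMDiffAt hU
  have hB : HasMFDerivAt 𝓘(ℝ, Fin m → ℝ) I F 0 B :=
    (hFc.mdifferentiableAt (by simp)).hasMFDerivAt
  have hA : HasMFDerivAt I I (⇑ψ) 1 A :=
    (hψ.contMDiffAt.mdifferentiableAt (by simp)).hasMFDerivAt
  -- The Kalman rank condition in the simplified form
  have hrank' : ∀ V : Submodule ℝ E, (∀ y, B y ∈ V) → (∀ X ∈ V, A X ∈ V) → V = ⊤ := by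
    intro V h1 h2
    refine hrank V (fun y => ?_) h2
    have hfun : (fun h : G => h * (F 0)⁻¹) = id := by
      funext h; rw [hF0, inv_one, mul_one]; rfl
    rw [hfun, mfderiv_id]
    exact h1 y
  have hVtop : LinearMap.range (Dk B A n : (Fin n → Fin m → ℝ) →ₗ[ℝ] E) = ⊤ := kalman_rank B A hrank'
  have hDsurj : Function.Surjective (Dk B A n) := LinearMap.range_eq_top.mp hVtop
  -- smoothness and derivative of the product map
  have hsm : ContMDiffAt 𝓘(ℝ, Fin n → (Fin m → ℝ)) I (⊤ : ℕ∞) (prodAux F (⇑ψ) n) 0 :=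
    prodAux_contMDiffAt (I := I) hψ hFc n
  have hder : HasMFDerivAt 𝓘(ℝ, Fin n → (Fin m → ℝ)) I (prodAux F (⇑ψ) n) 0 (Dk B A n) :=
    prodAux_hasMFDerivAt (I := I) hψ1 hF0 hA hB n
  -- the chart at the identity
  set C : E →L[ℝ] E := mfderiv I 𝓘(ℝ, E) (extChartAt I (1 : G)) 1 with hCdef
  have hCinj : Function.Injective C := by
    have hcomp := mfderivWithin_extChartAt_symm_comp_mfderiv_extChartAt'
      (I := I) (mem_extChartAt_source (I := I) (1 : G))
    intro a b hab
    have h1 : ∀ v : E,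
        (mfderivWithin 𝓘(ℝ, E) I (extChartAt I (1 : G)).symm (Set.range I)
          (extChartAt I (1 : G) 1)) (C v) = v := by
      intro v
      have h := ContinuousLinearMap.ext_iff.mp hcomp v
      exact h
    rw [← h1 a, ← h1 b, hab]
  have hCsurj : Function.Surjective C :=
    LinearMap.injective_iff_surjective.mp hCinj
  -- the map written in the chart
  set ftilde : (Fin n → (Fin m → ℝ)) → E := fun x => extChartAt I (1 : G) (prodAux F (⇑ψ) n x)
    with hftdef
  have hextM : ContMDiffAt I 𝓘(ℝ, E) (⊤ : ℕ∞) (extChartAt I (1 : G)) (prodAux F (⇑ψ) n 0) := by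
    rw [prodAux_zero hF0 hψ1 n]
    exact contMDiffAt_extChartAt
  have hftsm : ContMDiffAt 𝓘(ℝ, Fin n → (Fin m → ℝ)) 𝓘(ℝ, E) (⊤ : ℕ∞) ftilde 0 :=
    hextM.comp 0 hsm
  have hextD : HasMFDerivAt I 𝓘(ℝ, E) (extChartAt I (1 : G)) (prodAux F (⇑ψ) n 0) C := by
    rw [prodAux_zero hF0 hψ1 n]
    exact (mdifferentiableAt_extChartAt (mem_chart_source H (1 : G))).hasMFDerivAt
  have hftD : HasFDerivAt ftilde (C.comp (Dk B A n)) 0 :=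
    (hextD.comp 0 hder).hasFDerivAt
  have hftCD := contMDiffAt_iff_contDiffAt.mp hftsm
  have hstrict : HasStrictFDerivAt ftilde (C.comp (Dk B A n)) 0 := by
    have h := hftCD.hasStrictFDerivAt (by simp)
    rwa [hftD.fderiv] at h
  have hsurjD : LinearMap.range (C.comp (Dk B A n) : (Fin n → Fin m → ℝ) →ₗ[ℝ] E) = ⊤ :=
    LinearMap.range_eq_top.mpr (hCsurj.comp hDsurj)
  have hmap : Filter.map ftilde (nhds 0) = nhds (ftilde 0) :=
    hstrict.map_nhds_eq_of_surj hsurjD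
  have hft0 : ftilde 0 = extChartAt I (1 : G) 1 := by
    simp only [hftdef]
    rw [prodAux_zero hF0 hψ1 n]
  -- conclude via the chart
  have hle : nhds (1 : G) ≤ Filter.map (prodAux F (⇑ψ) n) (nhds 0) := by
    have h1 : Filter.map (extChartAt I (1 : G)).symm
        (nhdsWithin (extChartAt I (1 : G) 1) (Set.range I)) = nhds (1 : G) :=
      map_extChartAt_symm_nhdsWithin_range (I := I) (1 : G)
    rw [← h1]
    refine le_trans (Filter.map_mono nhdsWithin_le_nhds) ?_
    rw [← hft0, ← hmap, Filter.map_map]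
    apply le_of_eq
    apply Filter.map_congr
    have hsrc : (extChartAt I (1 : G)).source ∈ nhds (prodAux F (⇑ψ) n 0) := by
      rw [prodAux_zero hF0 hψ1 n]
      exact extChartAt_source_mem_nhds (I := I) 1
    filter_upwards [hsm.continuousAt.preimage_mem_nhds hsrc] with x hx
    exact PartialEquiv.left_inv _ hx
  have hN : {x : Fin n → (Fin m → ℝ) | ∀ i, x i ∈ U} ∈ nhds (0 : Fin n → (Fin m → ℝ)) := by
    have h1 : ∀ i : Fin n, {x : Fin n → (Fin m → ℝ) | x i ∈ U} ∈
        nhds (0 : Fin n → (Fin m → ℝ)) := fun i =>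
      (continuous_apply i).continuousAt.preimage_mem_nhds hU
    exact Filter.eventually_all.mpr h1
  have hRmem : Rset U F (⇑ψ) n ∈ nhds (1 : G) := by
    apply hle
    rw [Filter.mem_map]
    exact Filter.mem_of_superset hN fun x hx => prodAux_mem_Rset n x hx
  exact mem_interior_iff_mem_nhds.mpr hRmem
end
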